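/- arXiv:2502.15454 — 11 statements merged into one kernel-verified Lean document; each statement's English description precedes it below -/
import Mathlib

section
/- Let (D, 𝔄, μ) be a measure space and Σ_T, Σ_S, ψ, φ : D → ℝ measurable functions with Σ_T > 0 μ-a.e., Σ_S ≥ 0 μ-a.e., and Σ_S ≤ λ·Σ_T μ-a.e. for a constant λ ≥ 0. Assume Σ_T·ψ² and Σ_T·φ² are μ-integrable and that Σ_S·φ·ψ is μ-integrable. If ∫_D Σ_T ψ² dμ ≤ ∫_D Σ_S φ ψ dμ, then ‖√Σ_T · ψ‖_{L²(μ)} ≤ λ · ‖√Σ_T · φ‖_{L²(μ)} (equivalently, ∫_D Σ_T ψ² dμ ≤ λ² ∫_D Σ_T φ² dμ). -/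
/-!
Testing the source term against `t φ` and absorbing it with `2ab ≤ a² + b²` and `Σ_S ≤ λ Σ_T`
gives `2 t ∫ Σ_T ψ² ≤ λ (t² ∫ Σ_T φ² + ∫ Σ_T ψ²)` for every `t ≥ 0`. A quadratic in `t` that
stays nonnegative has nonpositive discriminant, which is exactly `∫ Σ_T ψ² ≤ λ² ∫ Σ_T φ²`.
-/

open MeasureTheory

theorem le_sq_mul_of_forall_two_mul_mul_le {a b l : ℝ} (ha : 0 ≤ a) (hb : 0 ≤ b) (hl : 0 ≤ l)
    (h : ∀ t, 0 ≤ t → 2 * t * a ≤ l * (t ^ 2 * b + a)) : a ≤ l ^ 2 * b := by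
  have hquad : ∀ t, 0 ≤ (l * b) * (t * t) + (-2 * a) * t + l * a := by
    intro t
    rcases le_or_gt 0 t with ht | ht
    · nlinarith [h t ht]
    · nlinarith [mul_nonneg hl hb, mul_nonneg hl ha, mul_nonneg (mul_nonneg hl hb) (sq_nonneg t)]
  have hdisc : a * a ≤ a * (l ^ 2 * b) := by
    have := discrim_le_zero hquad
    rw [discrim] at this
    nlinarith
  rcases ha.eq_or_lt with rfl | hapos
  · positivity
  · exact le_of_mul_le_mul_left hdisc hapos

theorem two_mul_mul_integral_le {α : Type*} [MeasurableSpace α] {μ : Measure α}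
    {v w f g : α → ℝ} {l : ℝ}
    (hv : ∀ᵐ x ∂μ, 0 ≤ v x) (hvw : ∀ᵐ x ∂μ, v x ≤ l * w x)
    (hf : Integrable (fun x => w x * f x ^ 2) μ) (hg : Integrable (fun x => w x * g x ^ 2) μ)
    (hvfg : Integrable (fun x => v x * f x * g x) μ) (t : ℝ) :
    2 * t * ∫ x, v x * f x * g x ∂μ
      ≤ l * (t ^ 2 * ∫ x, w x * f x ^ 2 ∂μ + ∫ x, w x * g x ^ 2 ∂μ) := by
  have pointwise : ∀ᵐ x ∂μ,
      2 * t * (v x * f x * g x) ≤ l * (t ^ 2 * (w x * f x ^ 2) + w x * g x ^ 2) := by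
    filter_upwards [hv, hvw] with x hvx hvwx
    calc 2 * t * (v x * f x * g x) = v x * (2 * (t * f x) * g x) := by ring
      _ ≤ v x * ((t * f x) ^ 2 + g x ^ 2) :=
          mul_le_mul_of_nonneg_left (two_mul_le_add_sq _ _) hvx
      _ ≤ l * w x * ((t * f x) ^ 2 + g x ^ 2) := by gcongr
      _ = l * (t ^ 2 * (w x * f x ^ 2) + w x * g x ^ 2) := by ring
  have hmono := integral_mono_ae (hvfg.const_mul (2 * t))
    (((hf.const_mul (t ^ 2)).add hg).const_mul l) pointwise
  simp only [Pi.add_apply] at hmono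
  rwa [integral_const_mul, integral_const_mul, integral_add (hf.const_mul _) hg,
    integral_const_mul] at hmono

theorem rsi_apriori_estimate_homogeneous_general
    {D : Type*} [MeasurableSpace D] (μ : Measure D)
    (SigT SigS ψ φ : D → ℝ) (lam : ℝ)
    (hSigTpos : ∀ᵐ x ∂μ, 0 < SigT x)
    (hSigSnonneg : ∀ᵐ x ∂μ, 0 ≤ SigS x)
    (hlam : 0 ≤ lam)
    (hSigSle : ∀ᵐ x ∂μ, SigS x ≤ lam * SigT x)
    (hint1 : Integrable (fun x => SigT x * ψ x ^ 2) μ)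
    (hint2 : Integrable (fun x => SigT x * φ x ^ 2) μ)
    (hint3 : Integrable (fun x => SigS x * φ x * ψ x) μ)
    (hineq : ∫ x, SigT x * ψ x ^ 2 ∂μ ≤ ∫ x, SigS x * φ x * ψ x ∂μ) :
    Real.sqrt (∫ x, SigT x * ψ x ^ 2 ∂μ) ≤ lam * Real.sqrt (∫ x, SigT x * φ x ^ 2 ∂μ) := by
  have energy_nonneg : ∀ u : D → ℝ, 0 ≤ ∫ x, SigT x * u x ^ 2 ∂μ := fun u =>
    integral_nonneg_of_ae <| hSigTpos.mono fun x hx => by positivity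
  have energy_le : ∫ x, SigT x * ψ x ^ 2 ∂μ ≤ lam ^ 2 * ∫ x, SigT x * φ x ^ 2 ∂μ := by
    refine le_sq_mul_of_forall_two_mul_mul_le (energy_nonneg ψ) (energy_nonneg φ) hlam
      fun t ht => ?_
    calc 2 * t * ∫ x, SigT x * ψ x ^ 2 ∂μ ≤ 2 * t * ∫ x, SigS x * φ x * ψ x ∂μ := by gcongr
      _ ≤ _ := two_mul_mul_integral_le hSigSnonneg hSigSle hint2 hint1 hint3 t
  calc Real.sqrt (∫ x, SigT x * ψ x ^ 2 ∂μ)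
      ≤ Real.sqrt (lam ^ 2 * ∫ x, SigT x * φ x ^ 2 ∂μ) := Real.sqrt_le_sqrt energy_le
    _ = lam * Real.sqrt (∫ x, SigT x * φ x ^ 2 ∂μ) := by
      rw [Real.sqrt_mul (sq_nonneg lam), Real.sqrt_sq hlam]

/-- Analytic core of the a priori energy estimate (Lemma 3.1, homogeneous case):
if `∫ Σ_T ψ² ≤ ∫ Σ_S φ ψ`, then `‖√Σ_T ψ‖_{L²} ≤ λ ‖√Σ_T φ‖_{L²}`. -/
theorem rsi_apriori_estimate_homogeneous
    {D : Type*} [MeasurableSpace D] (μ : Measure D)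
    (SigT SigS ψ φ : D → ℝ) (lam : ℝ)
    (hSigT : Measurable SigT) (hSigS : Measurable SigS)
    (hψ : Measurable ψ) (hφ : Measurable φ)
    (hSigTpos : ∀ᵐ x ∂μ, 0 < SigT x)
    (hSigSnonneg : ∀ᵐ x ∂μ, 0 ≤ SigS x)
    (hlam : 0 ≤ lam)
    (hSigSle : ∀ᵐ x ∂μ, SigS x ≤ lam * SigT x)
    (hint1 : Integrable (fun x => SigT x * ψ x ^ 2) μ)
    (hint2 : Integrable (fun x => SigT x * φ x ^ 2) μ)
    (hint3 : Integrable (fun x => SigS x * φ x * ψ x) μ)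
    (hineq : ∫ x, SigT x * ψ x ^ 2 ∂μ ≤ ∫ x, SigS x * φ x * ψ x ∂μ) :
    Real.sqrt (∫ x, SigT x * ψ x ^ 2 ∂μ) ≤ lam * Real.sqrt (∫ x, SigT x * φ x ^ 2 ∂μ) :=
  rsi_apriori_estimate_homogeneous_general μ SigT SigS ψ φ lam hSigTpos hSigSnonneg hlam hSigSle
    hint1 hint2 hint3 hineq
end

section
/- Let (D, 𝔄, μ) be a measure space and Σ_T, Σ_S, ψ, φ, Q : D → ℝ measurable functions with Σ_T > 0 μ-a.e., Σ_S ≥ 0 μ-a.e., and Σ_S ≤ λ·Σ_T μ-a.e. for a constant λ ≥ 0. Assume Σ_T·ψ², Σ_T·φ² and Q²/Σ_T are μ-integrable, and that Σ_S·φ·ψ and Q·ψ are μ-integrable. If ∫_D Σ_T ψ² dμ ≤ ∫_D (Σ_S φ + Q) ψ dμ, then ‖√Σ_T · ψ‖_{L²(μ)} ≤ λ · ‖√Σ_T · φ‖_{L²(μ)} + ‖Q/√Σ_T‖_{L²(μ)}. -/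
open MeasureTheory

/-- Analytic core of the a priori energy estimate (Lemma 3.1) with a source term `Q`:
if `∫ Σ_T ψ² ≤ ∫ (Σ_S φ + Q) ψ`, then
`‖√Σ_T ψ‖_{L²} ≤ λ ‖√Σ_T φ‖_{L²} + ‖Q/√Σ_T‖_{L²}`. -/
theorem rsi_apriori_estimate_with_source
    {D : Type*} [MeasurableSpace D] (μ : Measure D)
    (SigT SigS ψ φ Q : D → ℝ) (lam : ℝ)
    (hSigT : Measurable SigT) (hSigS : Measurable SigS)
    (hψ : Measurable ψ) (hφ : Measurable φ) (hQ : Measurable Q)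
    (hSigTpos : ∀ᵐ x ∂μ, 0 < SigT x)
    (hSigSnonneg : ∀ᵐ x ∂μ, 0 ≤ SigS x)
    (hlam : 0 ≤ lam)
    (hSigSle : ∀ᵐ x ∂μ, SigS x ≤ lam * SigT x)
    (hint1 : Integrable (fun x => SigT x * ψ x ^ 2) μ)
    (hint2 : Integrable (fun x => SigT x * φ x ^ 2) μ)
    (hint3 : Integrable (fun x => Q x ^ 2 / SigT x) μ)
    (hint4 : Integrable (fun x => SigS x * φ x * ψ x) μ)
    (hint5 : Integrable (fun x => Q x * ψ x) μ)
    (hineq : ∫ x, SigT x * ψ x ^ 2 ∂μ ≤ ∫ x, (SigS x * φ x + Q x) * ψ x ∂μ) :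
    Real.sqrt (∫ x, SigT x * ψ x ^ 2 ∂μ) ≤
      lam * Real.sqrt (∫ x, SigT x * φ x ^ 2 ∂μ) +
        Real.sqrt (∫ x, Q x ^ 2 / SigT x ∂μ) := by
  classical
  set A := ∫ x, SigT x * ψ x ^ 2 ∂μ with hA
  set B := ∫ x, SigT x * φ x ^ 2 ∂μ with hB
  set C := ∫ x, Q x ^ 2 / SigT x ∂μ with hC
  set f : D → ℝ := fun x => Real.sqrt (SigT x) * |ψ x| with hfdef
  set g : D → ℝ := fun x => Real.sqrt (SigT x) * |φ x| with hgdef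
  set h : D → ℝ := fun x => |Q x| / Real.sqrt (SigT x) with hhdef
  have hf_meas : Measurable f := (hSigT.sqrt).mul hψ.abs
  have hg_meas : Measurable g := (hSigT.sqrt).mul hφ.abs
  have hh_meas : Measurable h := hQ.abs.div (hSigT.sqrt)
  have hf_nonneg : ∀ x, 0 ≤ f x := fun x => mul_nonneg (Real.sqrt_nonneg _) (abs_nonneg _)
  have hg_nonneg : ∀ x, 0 ≤ g x := fun x => mul_nonneg (Real.sqrt_nonneg _) (abs_nonneg _)
  have hh_nonneg : ∀ x, 0 ≤ h x := fun x => div_nonneg (abs_nonneg _) (Real.sqrt_nonneg _)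
  have hf_sq : (fun x => f x ^ 2) =ᵐ[μ] fun x => SigT x * ψ x ^ 2 := by
    filter_upwards [hSigTpos] with x hx
    simp only [hfdef, mul_pow, sq_abs, Real.sq_sqrt hx.le]
  have hg_sq : (fun x => g x ^ 2) =ᵐ[μ] fun x => SigT x * φ x ^ 2 := by
    filter_upwards [hSigTpos] with x hx
    simp only [hgdef, mul_pow, sq_abs, Real.sq_sqrt hx.le]
  have hh_sq : (fun x => h x ^ 2) =ᵐ[μ] fun x => Q x ^ 2 / SigT x := by
    filter_upwards [hSigTpos] with x hx
    simp only [hhdef, div_pow, sq_abs, Real.sq_sqrt hx.le]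
  have hA_eq : ∫ x, f x ^ 2 ∂μ = A := integral_congr_ae hf_sq
  have hB_eq : ∫ x, g x ^ 2 ∂μ = B := integral_congr_ae hg_sq
  have hC_eq : ∫ x, h x ^ 2 ∂μ = C := integral_congr_ae hh_sq
  have hA0 : 0 ≤ A := by
    rw [← hA_eq]; exact integral_nonneg fun x => sq_nonneg _
  have hB0 : 0 ≤ B := by
    rw [← hB_eq]; exact integral_nonneg fun x => sq_nonneg _
  have hC0 : 0 ≤ C := by
    rw [← hC_eq]; exact integral_nonneg fun x => sq_nonneg _
  have h22 : Real.HolderConjugate 2 2 := Real.holderConjugate_iff.mpr ⟨one_lt_two, by norm_num⟩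
  have hmem : ∀ (u : D → ℝ), Measurable u → Integrable (fun x => u x ^ 2) μ →
      MemLp u (ENNReal.ofReal 2) μ := by
    intro u hu hu2
    have : (ENNReal.ofReal 2) = 2 := by norm_num
    rw [this]
    exact (memLp_two_iff_integrable_sq hu.aestronglyMeasurable).2 hu2
  have hf_mem : MemLp f (ENNReal.ofReal 2) μ :=
    hmem f hf_meas (hint1.congr hf_sq.symm)
  have hg_mem : MemLp g (ENNReal.ofReal 2) μ :=
    hmem g hg_meas (hint2.congr hg_sq.symm)
  have hh_mem : MemLp h (ENNReal.ofReal 2) μ :=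
    hmem h hh_meas (hint3.congr hh_sq.symm)
  have hrpow : ∀ (u : D → ℝ) (I : ℝ), 0 ≤ I → (∫ x, u x ^ 2 ∂μ = I) →
      (∫ x, u x ^ (2:ℝ) ∂μ) ^ ((1:ℝ)/2) = Real.sqrt I := by
    intro u I hI hu
    have : ∫ x, u x ^ (2:ℝ) ∂μ = I := by
      rw [← hu]; congr 1 with x
      rw [show (2:ℝ) = ((2:ℕ):ℝ) by norm_num, Real.rpow_natCast]
    rw [this, Real.sqrt_eq_rpow]
  have holder_gf : ∫ x, g x * f x ∂μ ≤ Real.sqrt B * Real.sqrt A := by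
    have := integral_mul_le_Lp_mul_Lq_of_nonneg h22
      (Filter.Eventually.of_forall hg_nonneg) (Filter.Eventually.of_forall hf_nonneg)
      hg_mem hf_mem
    rwa [hrpow g B hB0 hB_eq, hrpow f A hA0 hA_eq] at this
  have holder_hf : ∫ x, h x * f x ∂μ ≤ Real.sqrt C * Real.sqrt A := by
    have := integral_mul_le_Lp_mul_Lq_of_nonneg h22
      (Filter.Eventually.of_forall hh_nonneg) (Filter.Eventually.of_forall hf_nonneg)
      hh_mem hf_mem
    rwa [hrpow h C hC0 hC_eq, hrpow f A hA0 hA_eq] at this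
  -- integrability of the bounding products
  have hgf_int : Integrable (fun x => g x * f x) μ := by
    refine Integrable.mono' (hint2.add hint1) (hg_meas.mul hf_meas).aestronglyMeasurable ?_
    filter_upwards [hSigTpos] with x hx
    have h1 : g x * f x = SigT x * (|φ x| * |ψ x|) := by
      simp only [hfdef, hgdef]
      rw [show Real.sqrt (SigT x) * |φ x| * (Real.sqrt (SigT x) * |ψ x|)
          = (Real.sqrt (SigT x) * Real.sqrt (SigT x)) * (|φ x| * |ψ x|) by ring,
        Real.mul_self_sqrt hx.le]
    have h2 : |φ x| * |ψ x| ≤ φ x ^ 2 + ψ x ^ 2 := by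
      nlinarith [sq_nonneg (|φ x| - |ψ x|), sq_abs (φ x), sq_abs (ψ x),
        abs_nonneg (φ x), abs_nonneg (ψ x)]
    have h3 : 0 ≤ g x * f x := mul_nonneg (hg_nonneg x) (hf_nonneg x)
    rw [Real.norm_of_nonneg h3, h1]
    have := mul_le_mul_of_nonneg_left h2 hx.le
    simpa [mul_add] using this
  have hhf_int : Integrable (fun x => h x * f x) μ := by
    refine (hint5.abs).congr ?_
    filter_upwards [hSigTpos] with x hx
    have hs : Real.sqrt (SigT x) ≠ 0 := by positivity
    simp only [hfdef, hhdef]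
    rw [abs_mul]
    field_simp
  -- bound the RHS of hineq
  have hS_bound : ∫ x, SigS x * φ x * ψ x ∂μ ≤ lam * ∫ x, g x * f x ∂μ := by
    rw [← integral_const_mul]
    refine integral_mono_ae hint4 (hgf_int.const_mul lam) ?_
    filter_upwards [hSigTpos, hSigSnonneg, hSigSle] with x hx hS hSle
    have h1 : SigS x * φ x * ψ x ≤ SigS x * (|φ x| * |ψ x|) := by
      have : φ x * ψ x ≤ |φ x| * |ψ x| := by
        rw [← abs_mul]; exact le_abs_self _
      calc SigS x * φ x * ψ x = SigS x * (φ x * ψ x) := by ring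
        _ ≤ SigS x * (|φ x| * |ψ x|) := by
            exact mul_le_mul_of_nonneg_left this hS
    have h2 : SigS x * (|φ x| * |ψ x|) ≤ lam * SigT x * (|φ x| * |ψ x|) :=
      mul_le_mul_of_nonneg_right hSle (mul_nonneg (abs_nonneg _) (abs_nonneg _))
    have h3 : lam * SigT x * (|φ x| * |ψ x|) = lam * (g x * f x) := by
      simp only [hfdef, hgdef]
      rw [show Real.sqrt (SigT x) * |φ x| * (Real.sqrt (SigT x) * |ψ x|)
          = (Real.sqrt (SigT x) * Real.sqrt (SigT x)) * (|φ x| * |ψ x|) by ring,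
        Real.mul_self_sqrt hx.le]
      ring
    linarith
  have hQ_bound : ∫ x, Q x * ψ x ∂μ ≤ ∫ x, h x * f x ∂μ := by
    refine integral_mono_ae hint5 hhf_int ?_
    filter_upwards [hSigTpos] with x hx
    have hs : Real.sqrt (SigT x) ≠ 0 := by positivity
    have : h x * f x = |Q x| * |ψ x| := by
      simp only [hfdef, hhdef]
      field_simp
    rw [this, ← abs_mul]
    exact le_abs_self _
  have hsplit : ∫ x, (SigS x * φ x + Q x) * ψ x ∂μ
      = (∫ x, SigS x * φ x * ψ x ∂μ) + ∫ x, Q x * ψ x ∂μ := by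
    rw [← integral_add hint4 hint5]
    congr 1 with x; ring
  have key : A ≤ (lam * Real.sqrt B + Real.sqrt C) * Real.sqrt A := by
    calc A ≤ ∫ x, (SigS x * φ x + Q x) * ψ x ∂μ := hineq
      _ = (∫ x, SigS x * φ x * ψ x ∂μ) + ∫ x, Q x * ψ x ∂μ := hsplit
      _ ≤ lam * (∫ x, g x * f x ∂μ) + ∫ x, h x * f x ∂μ := by
          exact add_le_add hS_bound hQ_bound
      _ ≤ lam * (Real.sqrt B * Real.sqrt A) + Real.sqrt C * Real.sqrt A := by
          exact add_le_add (mul_le_mul_of_nonneg_left holder_gf hlam) holder_hf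
      _ = (lam * Real.sqrt B + Real.sqrt C) * Real.sqrt A := by ring
  rcases eq_or_lt_of_le hA0 with hA0' | hA0'
  · rw [← hA0', Real.sqrt_zero]
    positivity
  · have hsA : 0 < Real.sqrt A := Real.sqrt_pos.2 hA0'
    have : Real.sqrt A * Real.sqrt A ≤ (lam * Real.sqrt B + Real.sqrt C) * Real.sqrt A := by
      rwa [Real.mul_self_sqrt hA0]
    exact le_of_mul_le_mul_right this hsA
end

section
/- Assume p(k) > 0 for all k ∈ V and let a : V → H. Let X(σ) = Σ_{g=1}^G (1/p(σ(g))) • a(σ(g)) with σ drawn from the stratified sampling law of p. Then E[X] = Σ_{k∈V} a(k), and the variance satisfies E[ ‖X − Σ_{k∈V} a(k)‖² ] = Σ_{g=1}^G ( Σ_{k∈V_g} ‖a(k)‖²/p(k) − ‖Σ_{k∈V_g} a(k)‖² ). -/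
set_option linter.unusedSectionVars false
open Finset
open RealInnerProductSpace

section aux
variable {ι : Type*} [Fintype ι] [DecidableEq ι] {W : ι → Type*} [∀ i, Fintype (W i)]

lemma masterSum (c : ∀ i, W i → ℝ) :
    ∑ x : ∀ i, W i, ∏ i, c i (x i) = ∏ i, ∑ w, c i w :=
  (Fintype.prod_sum c).symm

lemma sum_piSplit {M : Type*} [AddCommMonoid M] (i : ι) (F : (∀ j, W j) → M) :
    ∑ x, F x
      = ∑ w : W i, ∑ y : ∀ j : {j // j ≠ i}, W j,
          F ((Equiv.piSplitAt i W).symm (w, y)) := by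
  rw [← Equiv.sum_comp (Equiv.piSplitAt i W).symm F, Fintype.sum_prod_type]

lemma piSplit_apply_self (i : ι) (w : W i) (y : ∀ j : {j // j ≠ i}, W j) :
    (Equiv.piSplitAt i W).symm (w, y) i = w := by
  simp [Equiv.piSplitAt]

lemma piSplit_apply_ne (i : ι) (w : W i) (y : ∀ j : {j // j ≠ i}, W j)
    {j : ι} (h : j ≠ i) :
    (Equiv.piSplitAt i W).symm (w, y) j = y ⟨j, h⟩ := by
  simp [Equiv.piSplitAt, h]

lemma prod_piSplit (i : ι) (d : ∀ j, W j → ℝ) (w : W i)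
    (y : ∀ j : {j // j ≠ i}, W j) :
    ∏ j, d j ((Equiv.piSplitAt i W).symm (w, y) j)
      = (∏ j : {j // j ≠ i}, d j (y j)) * d i w := by
  rw [← Finset.prod_erase_mul univ _ (Finset.mem_univ i), piSplit_apply_self]
  congr 1
  rw [Finset.prod_subtype (p := fun j => j ≠ i) (Finset.univ.erase i)
      (fun j => by simp [Finset.mem_erase])
      (fun j => d j ((Equiv.piSplitAt i W).symm (w, y) j))]
  refine Fintype.prod_congr _ _ fun j => ?_
  rw [piSplit_apply_ne i w y j.2]

lemma genV {M : Type*} [AddCommMonoid M] [Module ℝ M] (i : ι)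
    (d : ∀ j, W j → ℝ) (hd : ∀ j, j ≠ i → ∑ w, d j w = 1) (b : W i → M) :
    ∑ x : ∀ j, W j, (∏ j, d j (x j)) • b (x i) = ∑ w, d i w • b w := by
  rw [sum_piSplit i (fun x => (∏ j, d j (x j)) • b (x i))]
  refine Fintype.sum_congr _ _ fun w => ?_
  calc ∑ y : ∀ j : {j // j ≠ i}, W j,
        (∏ j, d j ((Equiv.piSplitAt i W).symm (w, y) j))
          • b ((Equiv.piSplitAt i W).symm (w, y) i)
      = ∑ y : ∀ j : {j // j ≠ i}, W j,
          (∏ j : {j // j ≠ i}, d j (y j)) • (d i w • b w) := by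
        refine Fintype.sum_congr _ _ fun y => ?_
        rw [piSplit_apply_self, prod_piSplit, mul_smul]
    _ = (∑ y : ∀ j : {j // j ≠ i}, W j, ∏ j : {j // j ≠ i}, d j (y j))
          • (d i w • b w) := (Finset.sum_smul).symm
    _ = d i w • b w := by
        rw [masterSum, Finset.prod_eq_one (fun j _ => hd j.1 j.2), one_smul]

lemma genPair (i j : ι) (hij : i ≠ j) (d : ∀ g, W g → ℝ)
    (hd : ∀ g, g ≠ i → g ≠ j → ∑ w, d g w = 1) (B : W i → W j → ℝ) :
    ∑ x : ∀ g, W g, (∏ g, d g (x g)) * B (x i) (x j)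
      = ∑ wi, ∑ wj, (d i wi * d j wj) * B wi wj := by
  have hj : j ≠ i := hij.symm
  rw [sum_piSplit i (fun x => (∏ g, d g (x g)) * B (x i) (x j))]
  refine Fintype.sum_congr _ _ fun wi => ?_
  calc ∑ y : ∀ g : {g // g ≠ i}, W g,
        (∏ g, d g ((Equiv.piSplitAt i W).symm (wi, y) g))
          * B ((Equiv.piSplitAt i W).symm (wi, y) i)
              ((Equiv.piSplitAt i W).symm (wi, y) j)
      = ∑ y : ∀ g : {g // g ≠ i}, W g,
          (∏ g : {g // g ≠ i}, d g.1 (y g)) • (d i wi * B wi (y ⟨j, hj⟩)) := by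
        refine Fintype.sum_congr _ _ fun y => ?_
        rw [piSplit_apply_self, prod_piSplit, piSplit_apply_ne i wi y hj,
          smul_eq_mul]
        ring
    _ = ∑ wj : W j, d j wj • (d i wi * B wi wj) :=
        genV (W := fun g : {g // g ≠ i} => W g.1) (⟨j, hj⟩ : {g // g ≠ i})
          (fun g w => d g.1 w)
          (fun g hg => hd g.1 g.2 (fun h => hg (Subtype.ext h)))
          (fun w => d i wi * B wi w)
    _ = ∑ wj, (d i wi * d j wj) * B wi wj := by
        refine Fintype.sum_congr _ _ fun wj => ?_
        rw [smul_eq_mul]; ring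

end aux

lemma filter_sum {V : Type*} [Fintype V] [DecidableEq V] {G : ℕ} (grp : V → Fin G)
    {M : Type*} [AddCommMonoid M] (g : Fin G) (f : V → M) :
    ∑ k ∈ univ.filter (fun k => grp k = g), f k = ∑ w : {k : V // grp k = g}, f w.1 :=
  Finset.sum_subtype _ (fun k => by simp) f

lemma transfer_sum {V : Type*} [Fintype V] [DecidableEq V] {G : ℕ} (grp : V → Fin G)
    {M : Type*} [AddCommMonoid M] (F : (Fin G → V) → M) :
    ∑ σ : {σ : Fin G → V // ∀ g, grp (σ g) = g}, F σ.1
      = ∑ x : ∀ g : Fin G, {k : V // grp k = g}, F (fun g => (x g).1) := by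
  rw [← Equiv.sum_comp
      (Equiv.subtypePiEquivPi (β := fun _ : Fin G => V)
        (p := fun g (k : V) => grp k = g)).symm (fun σ => F σ.1)]
  rfl

/-- Exact mean and variance of the stratified importance-sampling estimator
(the second-moment computation at the heart of Theorem 2.2): with `p k > 0`
for all `k`, the estimator `X(σ) = Σ_g (1/p(σ(g))) • a(σ(g))` under the
stratified sampling law satisfies `E[X] = Σ_k a k` and
`E‖X − Σ_k a k‖² = Σ_g ( Σ_{k∈V_g} ‖a k‖²/p k − ‖Σ_{k∈V_g} a k‖² )`. -/
theorem rsi_stratified_importance_sampling_mean_variance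
    {V : Type*} [Fintype V] [DecidableEq V] {G : ℕ}
    (grp : V → Fin G) (hgrp : ∀ g : Fin G, ∃ k, grp k = g)
    {H : Type*} [NormedAddCommGroup H] [InnerProductSpace ℝ H]
    (p : V → ℝ) (hp0 : ∀ k, 0 < p k)
    (hp1 : ∀ g : Fin G, ∑ k ∈ univ.filter (fun k => grp k = g), p k = 1)
    (a : V → H) :
    (∑ σ : {σ : Fin G → V // ∀ g, grp (σ g) = g},
        (∏ g, p (σ.1 g)) • (∑ g, (p (σ.1 g))⁻¹ • a (σ.1 g)) = ∑ k, a k)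
    ∧
    (∑ σ : {σ : Fin G → V // ∀ g, grp (σ g) = g},
        (∏ g, p (σ.1 g)) * ‖(∑ g, (p (σ.1 g))⁻¹ • a (σ.1 g)) - ∑ k, a k‖ ^ 2
      = ∑ g : Fin G,
          ((∑ k ∈ univ.filter (fun k => grp k = g), ‖a k‖ ^ 2 / p k)
            - ‖∑ k ∈ univ.filter (fun k => grp k = g), a k‖ ^ 2)) := by
  classical
  have hp1' : ∀ g : Fin G, ∑ w : {k : V // grp k = g}, p w.1 = 1 := fun g => by
    rw [← filter_sum grp g p]; exact hp1 g
  set A : Fin G → H := fun g => ∑ w : {k : V // grp k = g}, a w.1 with hA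
  set T : Fin G → ℝ := fun g => ∑ w : {k : V // grp k = g}, ‖a w.1‖ ^ 2 / p w.1 with hT
  have hμA : ∑ k, a k = ∑ g, A g := (Fintype.sum_fiberwise grp a).symm
  -- Part 1 on the Pi side
  have mean_pi : ∑ x : ∀ g : Fin G, {k : V // grp k = g},
      (∏ g, p (x g).1) • (∑ g, (p (x g).1)⁻¹ • a (x g).1) = ∑ k, a k := by
    calc ∑ x : ∀ g : Fin G, {k : V // grp k = g},
          (∏ g, p (x g).1) • (∑ g, (p (x g).1)⁻¹ • a (x g).1)
        = ∑ x : ∀ g : Fin G, {k : V // grp k = g},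
            ∑ g, (∏ g', p (x g').1) • ((p (x g).1)⁻¹ • a (x g).1) :=
          Fintype.sum_congr _ _ fun x => Finset.smul_sum
      _ = ∑ g, ∑ x : ∀ g : Fin G, {k : V // grp k = g},
            (∏ g', p (x g').1) • ((p (x g).1)⁻¹ • a (x g).1) := Finset.sum_comm
      _ = ∑ g, A g := by
          refine Finset.sum_congr rfl fun g _ => ?_
          have key := genV (W := fun g : Fin G => {k : V // grp k = g}) g
            (fun g' w => if g' = g then 1 else p w.1)
            (fun g' hg' => by simpa [hg'] using hp1' g')
            (fun w => a w.1)
          calc ∑ x : ∀ g : Fin G, {k : V // grp k = g},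
                (∏ g', p (x g').1) • ((p (x g).1)⁻¹ • a (x g).1)
              = ∑ x : ∀ g : Fin G, {k : V // grp k = g},
                  (∏ g', (if g' = g then (1:ℝ) else p (x g').1)) • a (x g).1 := by
                refine Fintype.sum_congr _ _ fun x => ?_
                rw [smul_smul]
                congr 1
                rw [← Finset.prod_erase_mul univ (fun g' => p (x g').1)
                      (Finset.mem_univ g),
                    ← Finset.prod_erase_mul univ
                      (fun g' => if g' = g then (1:ℝ) else p (x g').1)
                      (Finset.mem_univ g),
                    if_pos rfl, mul_one, mul_assoc,
                    mul_inv_cancel₀ (hp0 (x g).1).ne', mul_one]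
                exact (Finset.prod_congr rfl fun g' hg' => by
                  rw [if_neg (Finset.mem_erase.1 hg').1]).symm
            _ = ∑ w : {k : V // grp k = g},
                  (if g = g then (1:ℝ) else p w.1) • a w.1 := key
            _ = A g := by simp [hA]
      _ = ∑ k, a k := hμA.symm
  -- abbreviations for part 2
  have hP1 : ∑ x : ∀ g : Fin G, {k : V // grp k = g}, ∏ g, p (x g).1 = 1 := by
    rw [masterSum (W := fun g : Fin G => {k : V // grp k = g})
      (fun g w => p w.1)]
    exact Finset.prod_eq_one fun g _ => hp1' g
  have hXinner : ∑ x : ∀ g : Fin G, {k : V // grp k = g},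
      (∏ g, p (x g).1) * ⟪∑ g, (p (x g).1)⁻¹ • a (x g).1, ∑ k, a k⟫
        = ‖∑ k, a k‖ ^ 2 := by
    have h1 : ∑ x : ∀ g : Fin G, {k : V // grp k = g},
        (∏ g, p (x g).1) * ⟪∑ g, (p (x g).1)⁻¹ • a (x g).1, ∑ k, a k⟫
          = ⟪∑ x : ∀ g : Fin G, {k : V // grp k = g},
              (∏ g, p (x g).1) • (∑ g, (p (x g).1)⁻¹ • a (x g).1), ∑ k, a k⟫ := by
      rw [sum_inner]
      exact Fintype.sum_congr _ _ fun x => (real_inner_smul_left _ _ _).symm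
    rw [h1, mean_pi, real_inner_self_eq_norm_sq]
  have hnorm_expand : ∀ x : ∀ g : Fin G, {k : V // grp k = g},
      ‖∑ g, (p (x g).1)⁻¹ • a (x g).1‖ ^ 2
        = ∑ g, ∑ g', ((p (x g).1)⁻¹ * (p (x g').1)⁻¹) * ⟪a (x g).1, a (x g').1⟫ := by
    intro x
    rw [← real_inner_self_eq_norm_sq, sum_inner]
    refine Finset.sum_congr rfl fun g _ => ?_
    rw [real_inner_smul_left, inner_sum, Finset.mul_sum]
    refine Finset.sum_congr rfl fun g' _ => ?_
    rw [real_inner_smul_right]; ring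
  have hdiag : ∀ g : Fin G, ∑ x : ∀ g : Fin G, {k : V // grp k = g},
      (∏ g'', p (x g'').1) *
        (((p (x g).1)⁻¹ * (p (x g).1)⁻¹) * ⟪a (x g).1, a (x g).1⟫) = T g := by
    intro g
    have key := genV (W := fun g : Fin G => {k : V // grp k = g}) (M := ℝ) g
      (fun g' w => if g' = g then 1 else p w.1)
      (fun g' hg' => by simpa [hg'] using hp1' g')
      (fun w => ‖a w.1‖ ^ 2 / p w.1)
    calc ∑ x : ∀ g : Fin G, {k : V // grp k = g},
          (∏ g'', p (x g'').1) *
            (((p (x g).1)⁻¹ * (p (x g).1)⁻¹) * ⟪a (x g).1, a (x g).1⟫)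
        = ∑ x : ∀ g : Fin G, {k : V // grp k = g},
            (∏ g'', (if g'' = g then (1:ℝ) else p (x g'').1)) •
              (‖a (x g).1‖ ^ 2 / p (x g).1) := by
          refine Fintype.sum_congr _ _ fun x => ?_
          have hpne : p (x g).1 ≠ 0 := (hp0 (x g).1).ne'
          rw [real_inner_self_eq_norm_sq, smul_eq_mul,
              ← Finset.prod_erase_mul univ (fun g'' => p (x g'').1)
                (Finset.mem_univ g),
              ← Finset.prod_erase_mul univ
                (fun g'' => if g'' = g then (1:ℝ) else p (x g'').1)
                (Finset.mem_univ g), if_pos rfl,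
              show ∏ g'' ∈ univ.erase g, (if g'' = g then (1:ℝ) else p (x g'').1)
                  = ∏ g'' ∈ univ.erase g, p (x g'').1 from
                Finset.prod_congr rfl fun g'' hg'' => by
                  rw [if_neg (Finset.mem_erase.1 hg'').1]]
          field_simp
      _ = ∑ w : {k : V // grp k = g},
            (if g = g then (1:ℝ) else p w.1) • (‖a w.1‖ ^ 2 / p w.1) := key
      _ = T g := by simp [hT]
  have hoff : ∀ g g' : Fin G, g ≠ g' → ∑ x : ∀ g : Fin G, {k : V // grp k = g},
      (∏ g'', p (x g'').1) *
        (((p (x g).1)⁻¹ * (p (x g').1)⁻¹) * ⟪a (x g).1, a (x g').1⟫)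
        = ⟪A g, A g'⟫ := by
    intro g g' hne
    have key := genPair (W := fun g : Fin G => {k : V // grp k = g}) g g' hne
      (fun g'' w => if g'' = g ∨ g'' = g' then 1 else p w.1)
      (fun g'' h1 h2 => by simp only [h1, h2, or_self, if_false]; exact hp1' g'')
      (fun wi wj => ⟪a wi.1, a wj.1⟫)
    have hg'mem : g' ∈ (univ : Finset (Fin G)).erase g :=
      Finset.mem_erase.2 ⟨hne.symm, Finset.mem_univ g'⟩
    calc ∑ x : ∀ g : Fin G, {k : V // grp k = g},
          (∏ g'', p (x g'').1) *
            (((p (x g).1)⁻¹ * (p (x g').1)⁻¹) * ⟪a (x g).1, a (x g').1⟫)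
        = ∑ x : ∀ g : Fin G, {k : V // grp k = g},
            (∏ g'', (if g'' = g ∨ g'' = g' then (1:ℝ) else p (x g'').1)) *
              ⟪a (x g).1, a (x g').1⟫ := by
          refine Fintype.sum_congr _ _ fun x => ?_
          have h1 : p (x g).1 ≠ 0 := (hp0 (x g).1).ne'
          have h2 : p (x g').1 ≠ 0 := (hp0 (x g').1).ne'
          rw [← Finset.prod_erase_mul univ (fun g'' => p (x g'').1)
                (Finset.mem_univ g),
              ← Finset.prod_erase_mul (univ.erase g) (fun g'' => p (x g'').1)
                hg'mem,
              ← Finset.prod_erase_mul univ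
                (fun g'' => if g'' = g ∨ g'' = g' then (1:ℝ) else p (x g'').1)
                (Finset.mem_univ g),
              ← Finset.prod_erase_mul (univ.erase g)
                (fun g'' => if g'' = g ∨ g'' = g' then (1:ℝ) else p (x g'').1)
                hg'mem,
              if_pos (Or.inl rfl), if_pos (Or.inr rfl),
              show ∏ g'' ∈ (univ.erase g).erase g',
                    (if g'' = g ∨ g'' = g' then (1:ℝ) else p (x g'').1)
                  = ∏ g'' ∈ (univ.erase g).erase g', p (x g'').1 from
                Finset.prod_congr rfl fun g'' hg'' => by
                  obtain ⟨hb, hc⟩ := Finset.mem_erase.1 hg''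
                  have hno : ¬(g'' = g ∨ g'' = g') := by
                    push_neg
                    exact ⟨(Finset.mem_erase.1 hc).1, hb⟩
                  rw [if_neg hno]]
          field_simp
      _ = ∑ wi : {k : V // grp k = g}, ∑ wj : {k : V // grp k = g'},
            ((if g = g ∨ g = g' then (1:ℝ) else p wi.1) *
              (if g' = g ∨ g' = g' then (1:ℝ) else p wj.1)) * ⟪a wi.1, a wj.1⟫ := key
      _ = ⟪A g, A g'⟫ := by
          rw [hA, sum_inner]
          refine Fintype.sum_congr _ _ fun wi => ?_
          rw [inner_sum]
          refine Fintype.sum_congr _ _ fun wj => ?_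
          simp
  -- second moment
  have hsecond : ∑ x : ∀ g : Fin G, {k : V // grp k = g},
      (∏ g, p (x g).1) * ‖∑ g, (p (x g).1)⁻¹ • a (x g).1‖ ^ 2
        = ∑ g, (T g - ‖A g‖ ^ 2) + ‖∑ k, a k‖ ^ 2 := by
    have hμ2 : ‖∑ k, a k‖ ^ 2 = ∑ g, ∑ g', ⟪A g, A g'⟫ := by
      rw [← real_inner_self_eq_norm_sq, hμA, sum_inner]
      exact Finset.sum_congr rfl fun g _ => inner_sum _ _ _
    calc ∑ x : ∀ g : Fin G, {k : V // grp k = g},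
          (∏ g, p (x g).1) * ‖∑ g, (p (x g).1)⁻¹ • a (x g).1‖ ^ 2
        = ∑ x : ∀ g : Fin G, {k : V // grp k = g}, ∑ g, ∑ g',
            (∏ g'', p (x g'').1) *
              (((p (x g).1)⁻¹ * (p (x g').1)⁻¹) * ⟪a (x g).1, a (x g').1⟫) := by
          refine Fintype.sum_congr _ _ fun x => ?_
          rw [hnorm_expand x, Finset.mul_sum]
          exact Finset.sum_congr rfl fun g _ => Finset.mul_sum _ _ _
      _ = ∑ g, ∑ x : ∀ g : Fin G, {k : V // grp k = g}, ∑ g',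
            (∏ g'', p (x g'').1) *
              (((p (x g).1)⁻¹ * (p (x g').1)⁻¹) * ⟪a (x g).1, a (x g').1⟫) :=
          Finset.sum_comm
      _ = ∑ g, ∑ g', ∑ x : ∀ g : Fin G, {k : V // grp k = g},
            (∏ g'', p (x g'').1) *
              (((p (x g).1)⁻¹ * (p (x g').1)⁻¹) * ⟪a (x g).1, a (x g').1⟫) :=
          Finset.sum_congr rfl fun g _ => Finset.sum_comm
      _ = ∑ g, ∑ g', (if g = g' then T g else ⟪A g, A g'⟫) := by
          refine Finset.sum_congr rfl fun g _ => Finset.sum_congr rfl fun g' _ => ?_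
          by_cases h : g = g'
          · subst h; rw [if_pos rfl]; exact hdiag g
          · rw [if_neg h]; exact hoff g g' h
      _ = ∑ g, ((T g - ⟪A g, A g⟫) + ∑ g', ⟪A g, A g'⟫) := by
          refine Finset.sum_congr rfl fun g _ => ?_
          calc ∑ g', (if g = g' then T g else ⟪A g, A g'⟫)
              = ∑ g', (⟪A g, A g'⟫ +
                  if g = g' then T g - ⟪A g, A g'⟫ else 0) := by
                refine Finset.sum_congr rfl fun g' _ => ?_
                by_cases h : g = g' <;> simp [h]
            _ = (∑ g', ⟪A g, A g'⟫) +
                  ∑ g', (if g = g' then T g - ⟪A g, A g'⟫ else 0) :=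
                Finset.sum_add_distrib
            _ = (T g - ⟪A g, A g⟫) + ∑ g', ⟪A g, A g'⟫ := by
                rw [Finset.sum_ite_eq univ g
                  (fun g' => T g - ⟪A g, A g'⟫), if_pos (Finset.mem_univ g)]
                ring
      _ = ∑ g, (T g - ‖A g‖ ^ 2) + ‖∑ k, a k‖ ^ 2 := by
          rw [Finset.sum_add_distrib, ← hμ2]
          congr 1
          exact Finset.sum_congr rfl fun g _ => by
            rw [real_inner_self_eq_norm_sq]
  -- variance on the Pi side
  have var_pi : ∑ x : ∀ g : Fin G, {k : V // grp k = g},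
      (∏ g, p (x g).1) * ‖(∑ g, (p (x g).1)⁻¹ • a (x g).1) - ∑ k, a k‖ ^ 2
        = ∑ g, (T g - ‖A g‖ ^ 2) := by
    calc ∑ x : ∀ g : Fin G, {k : V // grp k = g},
          (∏ g, p (x g).1) * ‖(∑ g, (p (x g).1)⁻¹ • a (x g).1) - ∑ k, a k‖ ^ 2
        = ∑ x : ∀ g : Fin G, {k : V // grp k = g},
            ((∏ g, p (x g).1) * ‖∑ g, (p (x g).1)⁻¹ • a (x g).1‖ ^ 2 -
              2 * ((∏ g, p (x g).1) *
                ⟪∑ g, (p (x g).1)⁻¹ • a (x g).1, ∑ k, a k⟫) +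
              (∏ g, p (x g).1) * ‖∑ k, a k‖ ^ 2) := by
          refine Fintype.sum_congr _ _ fun x => ?_
          rw [norm_sub_sq_real]; ring
      _ = (∑ x : ∀ g : Fin G, {k : V // grp k = g},
            (∏ g, p (x g).1) * ‖∑ g, (p (x g).1)⁻¹ • a (x g).1‖ ^ 2) -
          2 * (∑ x : ∀ g : Fin G, {k : V // grp k = g},
            (∏ g, p (x g).1) * ⟪∑ g, (p (x g).1)⁻¹ • a (x g).1, ∑ k, a k⟫) +
          (∑ x : ∀ g : Fin G, {k : V // grp k = g}, ∏ g, p (x g).1) * ‖∑ k, a k‖ ^ 2 := by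
          rw [Finset.sum_add_distrib, Finset.sum_sub_distrib, ← Finset.mul_sum,
            ← Finset.sum_mul]
      _ = (∑ g, (T g - ‖A g‖ ^ 2) + ‖∑ k, a k‖ ^ 2) - 2 * ‖∑ k, a k‖ ^ 2 +
            1 * ‖∑ k, a k‖ ^ 2 := by rw [hsecond, hXinner, hP1]
      _ = ∑ g, (T g - ‖A g‖ ^ 2) := by ring
  refine ⟨?_, ?_⟩
  · exact (transfer_sum grp
      (fun σ => (∏ g, p (σ g)) • (∑ g, (p (σ g))⁻¹ • a (σ g)))).trans mean_pi
  · refine ((transfer_sum grp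
      (fun σ => (∏ g, p (σ g)) *
        ‖(∑ g, (p (σ g))⁻¹ • a (σ g)) - ∑ k, a k‖ ^ 2)).trans
      (var_pi.trans ?_))
    refine Finset.sum_congr rfl fun g _ => ?_
    rw [filter_sum grp g (fun k => ‖a k‖ ^ 2 / p k), filter_sum grp g a]
end

section
/- Let K : V × V → ℝ satisfy 0 < α ≤ K(k,m) ≤ β for all k, m ∈ V, and assume the normalization Σ_{m∈V} ω(m) K(k,m) = 1 for every k ∈ V. Let σ' and σ be two selections. Define c(k) = Σ_{g=1}^G ω(σ'(g)) K(σ'(g), k) for k ∈ V, and q(k) = ( Σ_{k'∈V_{grp(k)}} ω(k') c(k') ) / ( ω(k) c(k) ). Then for every m ∈ V: Σ_{g=1}^G ω(σ(g)) K(σ(g), m) q(σ(g)) ≤ β/α. -/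
open Finset

/-- Key computation in the proof of Lemma 3.3 (boundedness of RSI):
with `0 < α ≤ K(k,m) ≤ β` and `Σ_m ω m K k m = 1`, for the RSI weights
`q k = (Σ_{k' ∈ V_{grp k}} ω k' c k') / (ω k c k)` built from the previous
selection `σ'` via `c k = Σ_g ω(σ'(g)) K(σ'(g), k)`, one has
`Σ_g ω(σ(g)) K(σ(g), m) q(σ(g)) ≤ β/α` for every `m`. -/
theorem rsi_weight_sum_bounded
    {V : Type*} [Fintype V] [DecidableEq V] {G : ℕ}
    (grp : V → Fin G) (hgrp : ∀ g : Fin G, ∃ k, grp k = g)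
    (ω : V → ℝ) (hω : ∀ k, 0 < ω k)
    (K : V → V → ℝ) (α β : ℝ) (hα : 0 < α)
    (hK : ∀ k m, α ≤ K k m ∧ K k m ≤ β)
    (hnorm : ∀ k, ∑ m, ω m * K k m = 1)
    (σ' σ : {v : Fin G → V // ∀ g, grp (v g) = g})
    (c : V → ℝ) (hc : ∀ k, c k = ∑ g, ω (σ'.1 g) * K (σ'.1 g) k)
    (q : V → ℝ)
    (hq : ∀ k, q k =
      (∑ k' ∈ univ.filter (fun k' => grp k' = grp k), ω k' * c k') / (ω k * c k))
    (m : V) :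
    ∑ g, ω (σ.1 g) * K (σ.1 g) m * q (σ.1 g) ≤ β / α := by
  have hβ : α ≤ β := le_trans (hK m m).1 (hK m m).2
  have hG : Nonempty (Fin G) := ⟨grp m⟩
  set S := ∑ h, ω (σ'.1 h) with hS
  have hSpos : 0 < S := Finset.sum_pos (fun h _ => hω _) univ_nonempty
  have hcge : ∀ k, α * S ≤ c k := by
    intro k
    rw [hc, hS, Finset.mul_sum]
    refine Finset.sum_le_sum fun h _ => ?_
    rw [mul_comm α]
    exact mul_le_mul_of_nonneg_left (hK _ _).1 (hω _).le
  have hcpos : ∀ k, 0 < c k := fun k => lt_of_lt_of_le (mul_pos hα hSpos) (hcge k)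
  have key : ∀ g, ω (σ.1 g) * K (σ.1 g) m * q (σ.1 g)
      ≤ β * (∑ k' ∈ univ.filter (fun k' => grp k' = g), ω k' * c k') / (α * S) := by
    intro g
    have hg := σ.2 g
    set T := ∑ k' ∈ univ.filter (fun k' => grp k' = g), ω k' * c k' with hT
    have hTnn : 0 ≤ T := Finset.sum_nonneg fun k' _ => mul_nonneg (hω _).le (hcpos _).le
    have hqg : q (σ.1 g) = T / (ω (σ.1 g) * c (σ.1 g)) := by
      rw [hq, hg]
    rw [hqg]
    have h1 : ω (σ.1 g) * K (σ.1 g) m * (T / (ω (σ.1 g) * c (σ.1 g)))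
        = K (σ.1 g) m * T / c (σ.1 g) := by
      have hωne := (hω (σ.1 g)).ne'
      have hcne := (hcpos (σ.1 g)).ne'
      field_simp
    rw [h1]
    exact div_le_div₀ (mul_nonneg (le_trans hα.le hβ) hTnn)
      (mul_le_mul_of_nonneg_right (hK _ _).2 hTnn)
      (mul_pos hα hSpos) (hcge _)
  have hsum : ∑ k' : V, ω k' * c k' = S := by
    have h2 : ∀ k' : V, ω k' * c k' = ∑ h, ω (σ'.1 h) * (ω k' * K (σ'.1 h) k') := by
      intro k'
      rw [hc, Finset.mul_sum]
      exact Finset.sum_congr rfl fun h _ => by ring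
    simp_rw [h2]
    rw [Finset.sum_comm]
    simp_rw [← Finset.mul_sum, hnorm, mul_one]
    exact hS.symm
  calc ∑ g, ω (σ.1 g) * K (σ.1 g) m * q (σ.1 g)
      ≤ ∑ g, β * (∑ k' ∈ univ.filter (fun k' => grp k' = g), ω k' * c k') / (α * S) :=
        Finset.sum_le_sum fun g _ => key g
    _ = β * (∑ k' : V, ω k' * c k') / (α * S) := by
        rw [← Finset.sum_div, ← Finset.mul_sum, Finset.sum_fiberwise]
    _ = β / α := by
        rw [hsum, mul_comm α S, ← mul_div_mul_left β α hSpos.ne']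
        ring_nf
end

section
/- Let K : V × V → ℝ satisfy 0 < α ≤ K(k,m) ≤ β for all k, m ∈ V. For a selection v', define c^{v'}(m) = Σ_{g=1}^G ω(v'(g)) K(v'(g), m) and p^{v'}(m) = ω(m) c^{v'}(m) / Σ_{m'∈V_{grp(m)}} ω(m') c^{v'}(m'). Then the Doeblin minorization constant of the selection chain satisfies Σ_{v selection} ( min_{v' selection} Π_{g=1}^G p^{v'}(v(g)) ) ≥ (α/β)^G, where the sum runs over all selections v and the minimum over all selections v'. -/
open Finset

lemma rsi_sum_sel {V : Type*} [Fintype V] [DecidableEq V] {G : ℕ}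
    (grp : V → Fin G) (f : Fin G → V → ℝ) :
    ∑ v : {v : Fin G → V // ∀ g, grp (v g) = g}, ∏ g, f g (v.1 g)
      = ∏ g, ∑ m ∈ univ.filter (fun m => grp m = g), f g m := by
  rw [Finset.prod_univ_sum]
  rw [← Finset.sum_subtype (Fintype.piFinset fun g => univ.filter (fun m => grp m = g))
    (fun x => by simp [Fintype.mem_piFinset]) (fun v => ∏ g, f g (v g))]

/-- Lemma 3.5: the Doeblin minorization constant of the RSI selection chain is
at least `(α/β)^G`. For a selection `v'`, the transition probability to a
selection `v` is `Π_g p^{v'}(v(g))`, with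
`c^{v'}(m) = Σ_g ω(v'(g)) K(v'(g), m)` and
`p^{v'}(m) = ω m c^{v'}(m) / Σ_{m'∈V_{grp m}} ω m' c^{v'}(m')`. -/
theorem rsi_doeblin_minorization_constant
    {V : Type*} [Fintype V] [DecidableEq V] {G : ℕ}
    (grp : V → Fin G) (hgrp : ∀ g : Fin G, ∃ k, grp k = g)
    (ω : V → ℝ) (hω : ∀ k, 0 < ω k)
    (K : V → V → ℝ) (α β : ℝ) (hα : 0 < α)
    (hK : ∀ k m, α ≤ K k m ∧ K k m ≤ β) :
    (α / β) ^ G ≤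
      ∑ v : {v : Fin G → V // ∀ g, grp (v g) = g},
        (univ.inf'
          (univ_nonempty_iff.mpr
            ⟨⟨fun g => (hgrp g).choose, fun g => (hgrp g).choose_spec⟩⟩)
          (fun v' : {v : Fin G → V // ∀ g, grp (v g) = g} =>
            ∏ g, (ω (v.1 g) * (∑ g', ω (v'.1 g') * K (v'.1 g') (v.1 g)) /
              ∑ m' ∈ univ.filter (fun m' => grp m' = grp (v.1 g)),
                ω m' * (∑ g', ω (v'.1 g') * K (v'.1 g') m')))) := by
  classical
  rcases Nat.eq_zero_or_pos G with hG | hG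
  · subst hG
    simp only [pow_zero]
    have : ∀ v : {v : Fin 0 → V // ∀ g, grp (v g) = g},
        (univ.inf'
          (univ_nonempty_iff.mpr
            ⟨⟨fun g => (hgrp g).choose, fun g => (hgrp g).choose_spec⟩⟩)
          (fun v' : {v : Fin 0 → V // ∀ g, grp (v g) = g} =>
            ∏ g, (ω (v.1 g) * (∑ g', ω (v'.1 g') * K (v'.1 g') (v.1 g)) /
              ∑ m' ∈ univ.filter (fun m' => grp m' = grp (v.1 g)),
                ω m' * (∑ g', ω (v'.1 g') * K (v'.1 g') m')))) = 1 := by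
      intro v
      simp
    rw [Finset.sum_congr rfl (fun v _ => this v)]
    simp only [sum_const, nsmul_eq_mul, mul_one]
    have : 0 < (univ : Finset {v : Fin 0 → V // ∀ g, grp (v g) = g}).card := by
      refine card_pos.mpr ⟨⟨fun g => (hgrp g).choose, fun g => (hgrp g).choose_spec⟩, mem_univ _⟩
    exact_mod_cast this
  -- G ≥ 1 case
  have hne : Nonempty (Fin G) := ⟨⟨0, hG⟩⟩
  -- pick a witness element of V
  obtain ⟨k₀, -⟩ := hgrp ⟨0, hG⟩
  have hβ : 0 < β := lt_of_lt_of_le hα (le_trans (hK k₀ k₀).1 (hK k₀ k₀).2)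
  set S : Fin G → ℝ := fun g => ∑ m ∈ univ.filter (fun m => grp m = g), ω m with hS
  have hSpos : ∀ g, 0 < S g := by
    intro g
    obtain ⟨k, hk⟩ := hgrp g
    exact Finset.sum_pos (fun m _ => hω m) ⟨k, by simp [hk]⟩
  have hq1 : ∀ g, ∑ m ∈ univ.filter (fun m => grp m = g), ω m / S g = 1 := by
    intro g
    rw [← Finset.sum_div, div_self (hSpos g).ne']
  calc (α / β) ^ G
      = ∑ v : {v : Fin G → V // ∀ g, grp (v g) = g},
          ∏ g, (α / β) * (ω (v.1 g) / S g) := by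
        rw [rsi_sum_sel grp (fun g m => (α / β) * (ω m / S g))]
        have : ∀ g : Fin G, ∑ m ∈ univ.filter (fun m => grp m = g),
            (α / β) * (ω m / S g) = α / β := by
          intro g
          rw [← Finset.mul_sum, hq1 g, mul_one]
        rw [Finset.prod_congr rfl (fun g _ => this g)]
        simp
        rw [div_pow]
    _ ≤ _ := by
        apply Finset.sum_le_sum
        intro v _
        apply Finset.le_inf'
        intro v' _
        apply Finset.prod_le_prod
        · intro g _
          have h1 := hSpos g
          have h2 := (hω (v.1 g))
          positivity
        · intro g _
          set c : V → ℝ := fun m => ∑ g', ω (v'.1 g') * K (v'.1 g') m with hc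
          set W : ℝ := ∑ g', ω (v'.1 g') with hW
          have hWpos : 0 < W := Finset.sum_pos (fun g' _ => hω _) univ_nonempty
          have hclb : ∀ m, α * W ≤ c m := by
            intro m
            rw [hc, hW, Finset.mul_sum]
            exact Finset.sum_le_sum fun g' _ => by
              rw [mul_comm α]
              exact mul_le_mul_of_nonneg_left (hK _ m).1 (hω _).le
          have hcub : ∀ m, c m ≤ β * W := by
            intro m
            rw [hc, hW, Finset.mul_sum]
            exact Finset.sum_le_sum fun g' _ => by
              rw [mul_comm β]
              exact mul_le_mul_of_nonneg_left (hK _ m).2 (hω _).le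
          set m := v.1 g with hm
          have hmg : grp m = g := v.2 g
          set D : ℝ := ∑ m' ∈ univ.filter (fun m' => grp m' = grp m),
              ω m' * c m' with hD
          have hDpos : 0 < D := by
            obtain ⟨k, hk⟩ := hgrp (grp m)
            exact Finset.sum_pos (fun m' _ => mul_pos (hω m')
              (lt_of_lt_of_le (mul_pos hα hWpos) (hclb m'))) ⟨k, by simp [hk]⟩
          have hDub : D ≤ β * W * S g := by
            rw [hD, hS]
            simp only [← hmg, Finset.mul_sum, Finset.sum_mul]
            refine Finset.sum_le_sum fun m' _ => ?_
            calc ω m' * c m' ≤ ω m' * (β * W) := mul_le_mul_of_nonneg_left (hcub m') (hω m').le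
              _ = β * W * ω m' := by ring
          have key : α / β * (ω m / S g) ≤ ω m * c m / D := by
            rw [div_mul_div_comm, div_le_div_iff₀ (mul_pos hβ (hSpos g)) hDpos]
            have hωm := hω m
            have hSg := hSpos g
            have h1 : α * ω m * D ≤ α * ω m * (β * W * S g) :=
              mul_le_mul_of_nonneg_left hDub (by positivity)
            have h2 : ω m * (α * W) * (β * S g) ≤ ω m * c m * (β * S g) :=
              mul_le_mul_of_nonneg_right
                (mul_le_mul_of_nonneg_left (hclb m) (hω m).le)
                (by positivity)
            nlinarith [h1, h2]
          exact key
end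

section
/- Let S be a nonempty finite set and P : S × S → ℝ a stochastic matrix, i.e., P(i,j) ≥ 0 for all i, j and Σ_{j∈S} P(i,j) = 1 for every i. Let c = Σ_{j∈S} min_{i∈S} P(i,j). Then for any two probability vectors μ, ν on S (μ(i), ν(i) ≥ 0, Σ_i μ(i) = Σ_i ν(i) = 1) and every n ≥ 0, the total variation distance of the n-step distributions satisfies (1/2) Σ_{j∈S} | (μ Pⁿ)(j) − (ν Pⁿ)(j) | ≤ (1 − c)ⁿ, where (μ Pⁿ)(j) = Σ_{i} μ(i) (Pⁿ)(i,j) and Pⁿ is the n-th matrix power of P. -/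
/-! Every row of `P` dominates the row `m j = min_i P i j`. For a signed vector `f` of total
mass zero, `f ᵥ* P = f ᵥ* (P - vecMulVec 1 m)`, and `P - vecMulVec 1 m` is nonnegative with row
sums `1 - c`, so `∑ |f ᵥ* P| ≤ (1 - c) ∑ |f|`. Since `P` preserves total mass, iterating from
`f = μ - ν`, for which `∑ |f| ≤ 2`, gives the bound. -/

open Finset Matrix

section Semiring

variable {R S : Type*} [Semiring R] [Fintype S] {P : Matrix S S R}

theorem sum_vecMul_of_sum_row_eq_one (hP1 : ∀ i, ∑ j, P i j = 1) (f : S → R) :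
    ∑ j, (f ᵥ* P) j = ∑ i, f i := by
  simp only [vecMul, dotProduct]
  rw [sum_comm]
  simp only [← mul_sum, hP1, mul_one]

theorem sum_vecMul_pow_of_sum_row_eq_one [DecidableEq S] (hP1 : ∀ i, ∑ j, P i j = 1)
    (f : S → R) (n : ℕ) :
    ∑ j, (f ᵥ* P ^ n) j = ∑ i, f i := by
  induction n with
  | zero => simp
  | succ k ih => rw [pow_succ, ← vecMul_vecMul, sum_vecMul_of_sum_row_eq_one hP1, ih]

end Semiring

section OrderedRing

variable {R S T : Type*} [CommRing R] [LinearOrder R] [IsStrictOrderedRing R] [Fintype S]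

theorem sum_abs_vecMul_le_of_nonneg [Fintype T] {A : Matrix S T R} (hA : ∀ i j, 0 ≤ A i j)
    (f : S → R) : ∑ j, |(f ᵥ* A) j| ≤ ∑ i, |f i| * ∑ j, A i j := by
  calc ∑ j, |(f ᵥ* A) j|
      ≤ ∑ j, ∑ i, |f i| * A i j := by
        refine sum_le_sum fun j _ => (abs_sum_le_sum_abs _ _).trans_eq ?_
        simp only [abs_mul, abs_of_nonneg (hA _ j)]
    _ = ∑ i, |f i| * ∑ j, A i j := by simp only [sum_comm (γ := T), mul_sum]

variable {P : Matrix S S R} {m : S → R}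

theorem sum_le_one_of_le_of_sum_row_eq_one [Nonempty S] (hm : ∀ i j, m j ≤ P i j)
    (hP1 : ∀ i, ∑ j, P i j = 1) : ∑ j, m j ≤ 1 := by
  obtain ⟨i⟩ := ‹Nonempty S›
  exact (hP1 i).symm ▸ sum_le_sum fun j _ => hm i j

theorem sum_abs_vecMul_le_of_le (hm : ∀ i j, m j ≤ P i j) (hP1 : ∀ i, ∑ j, P i j = 1)
    {f : S → R} (hf : ∑ i, f i = 0) :
    ∑ j, |(f ᵥ* P) j| ≤ (1 - ∑ j, m j) * ∑ i, |f i| := by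
  set Q : Matrix S S R := P - vecMulVec 1 m
  have hQ0 : ∀ i j, 0 ≤ Q i j := fun i j => by simp [Q, vecMulVec, hm i j]
  have hQ1 : ∀ i, ∑ j, Q i j = 1 - ∑ j, m j := fun i => by
    simp [Q, vecMulVec, sum_sub_distrib, hP1]
  have hfQ : f ᵥ* Q = f ᵥ* P := by
    rw [vecMul_sub, vecMul_vecMulVec, dotProduct_one, hf, zero_smul, sub_zero]
  calc ∑ j, |(f ᵥ* P) j|
      ≤ ∑ i, |f i| * ∑ j, Q i j := hfQ ▸ sum_abs_vecMul_le_of_nonneg hQ0 f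
    _ = (1 - ∑ j, m j) * ∑ i, |f i| := by simp only [hQ1]; rw [← sum_mul, mul_comm]

theorem sum_abs_vecMul_pow_le_of_le [DecidableEq S] [Nonempty S] (hm : ∀ i j, m j ≤ P i j)
    (hP1 : ∀ i, ∑ j, P i j = 1) {f : S → R} (hf : ∑ i, f i = 0) (n : ℕ) :
    ∑ j, |(f ᵥ* P ^ n) j| ≤ (1 - ∑ j, m j) ^ n * ∑ i, |f i| := by
  induction n with
  | zero => simp
  | succ k ih =>
    have hfk : ∑ i, (f ᵥ* P ^ k) i = 0 := by rw [sum_vecMul_pow_of_sum_row_eq_one hP1, hf]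
    have hc : 0 ≤ 1 - ∑ j, m j := sub_nonneg.2 (sum_le_one_of_le_of_sum_row_eq_one hm hP1)
    calc ∑ j, |(f ᵥ* P ^ (k + 1)) j|
        = ∑ j, |((f ᵥ* P ^ k) ᵥ* P) j| := by rw [pow_succ, vecMul_vecMul]
      _ ≤ (1 - ∑ j, m j) * ∑ i, |(f ᵥ* P ^ k) i| := sum_abs_vecMul_le_of_le hm hP1 hfk
      _ ≤ (1 - ∑ j, m j) * ((1 - ∑ j, m j) ^ k * ∑ i, |f i|) := by gcongr
      _ = (1 - ∑ j, m j) ^ (k + 1) * ∑ i, |f i| := by ring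

theorem sum_abs_sub_le_two {μ ν : S → R} (hμ0 : ∀ i, 0 ≤ μ i) (hν0 : ∀ i, 0 ≤ ν i)
    (hμ1 : ∑ i, μ i = 1) (hν1 : ∑ i, ν i = 1) : ∑ i, |μ i - ν i| ≤ 2 := by
  calc ∑ i, |μ i - ν i| ≤ ∑ i, (|μ i| + |ν i|) := sum_le_sum fun i _ => abs_sub _ _
    _ = 2 := by
      simp only [sum_add_distrib, abs_of_nonneg (hμ0 _), abs_of_nonneg (hν0 _), hμ1, hν1]
      exact one_add_one_eq_two

end OrderedRing

theorem doeblin_total_variation_contraction_general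
    {S : Type*} [Fintype S] [DecidableEq S] [Nonempty S]
    (P : Matrix S S ℝ)
    (hP1 : ∀ i, ∑ j, P i j = 1)
    (c : ℝ) (hc : c = ∑ j, univ.inf' univ_nonempty (fun i => P i j))
    (μ ν : S → ℝ) (hμ0 : ∀ i, 0 ≤ μ i) (hν0 : ∀ i, 0 ≤ ν i)
    (hμ1 : ∑ i, μ i = 1) (hν1 : ∑ i, ν i = 1) (n : ℕ) :
    (1 / 2) * ∑ j, |(∑ i, μ i * (P ^ n) i j) - ∑ i, ν i * (P ^ n) i j|
      ≤ (1 - c) ^ n := by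
  have hm : ∀ i j, univ.inf' univ_nonempty (fun i => P i j) ≤ P i j :=
    fun i _ => inf'_le _ (mem_univ i)
  have hc1 : 0 ≤ 1 - c := sub_nonneg.2 (hc ▸ sum_le_one_of_le_of_sum_row_eq_one hm hP1)
  have hmass : ∑ i, (μ - ν) i = 0 := by simp [sum_sub_distrib, hμ1, hν1]
  have hcontr := hc ▸ sum_abs_vecMul_pow_le_of_le hm hP1 hmass n
  calc _ = (1 / 2) * ∑ j, |((μ - ν) ᵥ* P ^ n) j| := by simp only [sub_vecMul]; rfl
    _ ≤ (1 / 2) * ((1 - c) ^ n * 2) := by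
        gcongr
        exact hcontr.trans (by gcongr; exact sum_abs_sub_le_two hμ0 hν0 hμ1 hν1)
    _ = (1 - c) ^ n := by ring

/-- Lemma 3.4 (Doeblin coupling bound): for a stochastic matrix `P` on a finite
state space with minorization constant `c = Σ_j min_i P i j`, the `n`-step
distributions from any two initial probability vectors contract in total
variation at geometric rate `1 − c`. -/
theorem doeblin_total_variation_contraction
    {S : Type*} [Fintype S] [DecidableEq S] [Nonempty S]
    (P : Matrix S S ℝ)
    (hP0 : ∀ i j, 0 ≤ P i j) (hP1 : ∀ i, ∑ j, P i j = 1)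
    (c : ℝ) (hc : c = ∑ j, univ.inf' univ_nonempty (fun i => P i j))
    (μ ν : S → ℝ) (hμ0 : ∀ i, 0 ≤ μ i) (hν0 : ∀ i, 0 ≤ ν i)
    (hμ1 : ∑ i, μ i = 1) (hν1 : ∑ i, ν i = 1) (n : ℕ) :
    (1 / 2) * ∑ j, |(∑ i, μ i * (P ^ n) i j) - ∑ i, ν i * (P ^ n) i j|
      ≤ (1 - c) ^ n :=
  doeblin_total_variation_contraction_general P hP1 c hc μ ν hμ0 hν0 hμ1 hν1 n
end

section
/- Assume p(k) > 0 for all k ∈ V. Let H be a real normed vector space, K : V × V → ℝ with K(k,m) ≥ 0 and Σ_{m∈V} ω(m) K(k,m) = 1 for every k ∈ V, ω : V → ℝ with ω(k) > 0, and for each m ∈ V let A_m : H → H be a linear map with ‖A_m x‖ ≤ λ ‖x‖ for all x ∈ H, where λ ≥ 0. For x : V → H and a selection σ, define Φ^x_m(σ) = A_m( Σ_{g=1}^G ( ω(σ(g)) K(σ(g), m) / p(σ(g)) ) • x_{σ(g)} ), and similarly Φ^y for y : V → H. Then, with σ drawn from the stratified sampling law of p, E[ Σ_{m∈V} ω(m)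 ‖Φ^x_m(σ) − Φ^y_m(σ)‖ ] ≤ λ · Σ_{k∈V} ω(k) ‖x_k − y_k‖. -/
open Finset

lemma marginal_sum {V : Type*} [Fintype V] [DecidableEq V] {G : ℕ}
    (grp : V → Fin G) (p : V → ℝ)
    (hp1 : ∀ g : Fin G, ∑ k ∈ univ.filter (fun k => grp k = g), p k = 1)
    (f : V → ℝ) (g0 : Fin G) :
    ∑ σ : {σ : Fin G → V // ∀ g, grp (σ g) = g}, (∏ g, p (σ.1 g)) * f (σ.1 g0)
      = ∑ k ∈ univ.filter (fun k => grp k = g0), p k * f k := by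
  classical
  set h : Fin G → V → ℝ := fun g k => if g = g0 then p k * f k else p k with hh
  have hsplit : ∀ σ : {σ : Fin G → V // ∀ g, grp (σ g) = g},
      (∏ g, p (σ.1 g)) * f (σ.1 g0) = ∏ g, h g (σ.1 g) := by
    intro σ
    rw [Finset.prod_eq_mul_prod_sdiff_singleton_of_mem (mem_univ g0) (fun g => h g (σ.1 g)),
        Finset.prod_eq_mul_prod_sdiff_singleton_of_mem (mem_univ g0) (fun g => p (σ.1 g))]
    have hrest : ∏ g ∈ univ \ {g0}, h g (σ.1 g) = ∏ g ∈ univ \ {g0}, p (σ.1 g) := by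
      refine Finset.prod_congr rfl fun g hg => ?_
      simp only [mem_sdiff, mem_singleton] at hg
      simp [hh, hg.2]
    rw [hrest]
    simp only [hh, if_pos rfl]
    ring
  simp_rw [hsplit]
  let e : {σ : Fin G → V // ∀ g, grp (σ g) = g} ≃ (∀ g, {k : V // grp k = g}) :=
    { toFun := fun σ g => ⟨σ.1 g, σ.2 g⟩,
      invFun := fun σ => ⟨fun g => (σ g).1, fun g => (σ g).2⟩,
      left_inv := fun _ => rfl, right_inv := fun _ => rfl }
  rw [show (∑ σ : {σ : Fin G → V // ∀ g, grp (σ g) = g}, ∏ g, h g (σ.1 g))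
      = ∑ τ : ∀ g, {k : V // grp k = g}, ∏ g, h g (τ g).1 from
    (Equiv.sum_comp e.symm (fun σ : {σ : Fin G → V // ∀ g, grp (σ g) = g} =>
      ∏ g, h g (σ.1 g))).symm]
  rw [← Fintype.prod_sum (fun g (k : {k : V // grp k = g}) => h g k.1)]
  have hfib : ∀ (g : Fin G) (q : V → ℝ),
      (∑ k : {k : V // grp k = g}, q k.1) = ∑ k ∈ univ.filter (fun k => grp k = g), q k := by
    intro g q
    refine (Finset.sum_subtype (univ.filter (fun k => grp k = g)) ?_ q).symm
    intro k; simp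
  rw [Finset.prod_eq_mul_prod_sdiff_singleton_of_mem (mem_univ g0)]
  have h1 : (∑ k : {k : V // grp k = g0}, h g0 k.1)
      = ∑ k ∈ univ.filter (fun k => grp k = g0), p k * f k := by
    rw [hfib g0 (h g0)]; simp [hh]
  have h2 : ∏ g ∈ univ \ {g0}, (∑ k : {k : V // grp k = g}, h g k.1) = 1 := by
    refine Finset.prod_eq_one fun g hg => ?_
    simp only [mem_sdiff, mem_singleton] at hg
    rw [hfib g (h g)]
    simp only [hh, if_neg hg.2]
    exact hp1 g
  rw [h1, h2, mul_one]

/-- Single-step contraction estimate in the proof of Lemma 3.2: with the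
transport sweep abstracted by linear maps `A m` of operator norm at most `λ`,
the expected weighted distance between the randomized scattering sources
built from `x` and from `y` is at most `λ Σ_k ω k ‖x k − y k‖`. -/
theorem rsi_one_step_contraction
    {V : Type*} [Fintype V] [DecidableEq V] {G : ℕ}
    (grp : V → Fin G) (hgrp : ∀ g : Fin G, ∃ k, grp k = g)
    {H : Type*} [NormedAddCommGroup H] [NormedSpace ℝ H]
    (ω : V → ℝ) (hω : ∀ k, 0 < ω k)
    (K : V → V → ℝ) (hK : ∀ k m, 0 ≤ K k m)
    (hnorm : ∀ k, ∑ m, ω m * K k m = 1)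
    (lam : ℝ) (hlam : 0 ≤ lam)
    (A : V → H →ₗ[ℝ] H) (hA : ∀ m x, ‖A m x‖ ≤ lam * ‖x‖)
    (p : V → ℝ) (hp : ∀ k, 0 < p k)
    (hp1 : ∀ g : Fin G, ∑ k ∈ univ.filter (fun k => grp k = g), p k = 1)
    (x y : V → H) :
    ∑ σ : {σ : Fin G → V // ∀ g, grp (σ g) = g},
      (∏ g, p (σ.1 g)) *
        ∑ m, ω m *
          ‖A m (∑ g, (ω (σ.1 g) * K (σ.1 g) m / p (σ.1 g)) • x (σ.1 g))
            - A m (∑ g, (ω (σ.1 g) * K (σ.1 g) m / p (σ.1 g)) • y (σ.1 g))‖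
      ≤ lam * ∑ k, ω k * ‖x k - y k‖ := by
  classical
  have hc : ∀ k m, 0 ≤ ω k * K k m / p k := fun k m =>
    div_nonneg (mul_nonneg (hω k).le (hK k m)) (hp k).le
  -- pointwise bound on each norm
  have pt : ∀ σ : {σ : Fin G → V // ∀ g, grp (σ g) = g}, ∀ m,
      ‖A m (∑ g, (ω (σ.1 g) * K (σ.1 g) m / p (σ.1 g)) • x (σ.1 g))
        - A m (∑ g, (ω (σ.1 g) * K (σ.1 g) m / p (σ.1 g)) • y (σ.1 g))‖
      ≤ lam * ∑ g, (ω (σ.1 g) * K (σ.1 g) m / p (σ.1 g)) * ‖x (σ.1 g) - y (σ.1 g)‖ := by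
    intro σ m
    rw [← map_sub, ← Finset.sum_sub_distrib]
    have hs : ∀ g ∈ (univ : Finset (Fin G)),
        (ω (σ.1 g) * K (σ.1 g) m / p (σ.1 g)) • x (σ.1 g)
          - (ω (σ.1 g) * K (σ.1 g) m / p (σ.1 g)) • y (σ.1 g)
        = (ω (σ.1 g) * K (σ.1 g) m / p (σ.1 g)) • (x (σ.1 g) - y (σ.1 g)) := by
      intro g _; rw [smul_sub]
    rw [Finset.sum_congr rfl hs]
    calc ‖A m (∑ g, (ω (σ.1 g) * K (σ.1 g) m / p (σ.1 g)) • (x (σ.1 g) - y (σ.1 g)))‖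
        ≤ lam * ‖∑ g, (ω (σ.1 g) * K (σ.1 g) m / p (σ.1 g)) • (x (σ.1 g) - y (σ.1 g))‖ :=
          hA m _
      _ ≤ lam * ∑ g, (ω (σ.1 g) * K (σ.1 g) m / p (σ.1 g)) * ‖x (σ.1 g) - y (σ.1 g)‖ := by
          refine mul_le_mul_of_nonneg_left ?_ hlam
          refine (norm_sum_le _ _).trans (le_of_eq ?_)
          refine Finset.sum_congr rfl fun g _ => ?_
          rw [norm_smul, Real.norm_eq_abs, abs_of_nonneg (hc _ _)]
  -- inner algebraic identity via hnorm
  have inner_eq : ∀ σ : {σ : Fin G → V // ∀ g, grp (σ g) = g},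
      ∑ m, ω m * (lam * ∑ g, (ω (σ.1 g) * K (σ.1 g) m / p (σ.1 g))
          * ‖x (σ.1 g) - y (σ.1 g)‖)
      = lam * ∑ g, (ω (σ.1 g) / p (σ.1 g)) * ‖x (σ.1 g) - y (σ.1 g)‖ := by
    intro σ
    simp_rw [Finset.mul_sum]
    rw [Finset.sum_comm]
    refine Finset.sum_congr rfl fun g _ => ?_
    have hfac : ∑ m, ω m * (lam * ((ω (σ.1 g) * K (σ.1 g) m / p (σ.1 g))
          * ‖x (σ.1 g) - y (σ.1 g)‖))
        = (lam * (ω (σ.1 g) / p (σ.1 g)) * ‖x (σ.1 g) - y (σ.1 g)‖)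
            * ∑ m, ω m * K (σ.1 g) m := by
      rw [Finset.mul_sum]
      refine Finset.sum_congr rfl fun m _ => ?_
      ring
    rw [hfac, hnorm, mul_one]
    ring
  -- first reduction
  have step1 : ∑ σ : {σ : Fin G → V // ∀ g, grp (σ g) = g},
      (∏ g, p (σ.1 g)) *
        ∑ m, ω m *
          ‖A m (∑ g, (ω (σ.1 g) * K (σ.1 g) m / p (σ.1 g)) • x (σ.1 g))
            - A m (∑ g, (ω (σ.1 g) * K (σ.1 g) m / p (σ.1 g)) • y (σ.1 g))‖
      ≤ ∑ σ : {σ : Fin G → V // ∀ g, grp (σ g) = g},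
          (∏ g, p (σ.1 g)) *
            (lam * ∑ g, (ω (σ.1 g) / p (σ.1 g)) * ‖x (σ.1 g) - y (σ.1 g)‖) := by
    refine Finset.sum_le_sum fun σ _ => ?_
    refine mul_le_mul_of_nonneg_left ?_ (Finset.prod_nonneg fun g _ => (hp _).le)
    rw [← inner_eq σ]
    exact Finset.sum_le_sum fun m _ =>
      mul_le_mul_of_nonneg_left (pt σ m) (hω m).le
  refine step1.trans (le_of_eq ?_)
  -- compute the expectation exactly
  have swap : ∑ σ : {σ : Fin G → V // ∀ g, grp (σ g) = g},
      (∏ g, p (σ.1 g)) *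
        (lam * ∑ g, (ω (σ.1 g) / p (σ.1 g)) * ‖x (σ.1 g) - y (σ.1 g)‖)
      = lam * ∑ g0 : Fin G, ∑ σ : {σ : Fin G → V // ∀ g, grp (σ g) = g},
          (∏ g, p (σ.1 g)) * ((ω (σ.1 g0) / p (σ.1 g0)) * ‖x (σ.1 g0) - y (σ.1 g0)‖) := by
    simp_rw [Finset.mul_sum]
    rw [Finset.sum_comm]
    exact Finset.sum_congr rfl fun g0 _ => Finset.sum_congr rfl fun σ _ => by ring
  rw [swap]
  congr 1
  have marg : ∀ g0 : Fin G,
      ∑ σ : {σ : Fin G → V // ∀ g, grp (σ g) = g},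
        (∏ g, p (σ.1 g)) * ((ω (σ.1 g0) / p (σ.1 g0)) * ‖x (σ.1 g0) - y (σ.1 g0)‖)
      = ∑ k ∈ univ.filter (fun k => grp k = g0), ω k * ‖x k - y k‖ := by
    intro g0
    rw [marginal_sum grp p hp1 (fun k => (ω k / p k) * ‖x k - y k‖) g0]
    refine Finset.sum_congr rfl fun k _ => ?_
    field_simp
    rw [mul_assoc]; exact mul_div_cancel_left₀ _ (hp k).ne'
  simp_rw [marg]
  exact Finset.sum_fiberwise univ grp (fun k => ω k * ‖x k - y k‖)
end

section
/- In the abstract RSI chain with the RSI initial distribution built from a given ψ⁰ : V → H, the iterates are unbiased with respect to source iteration: for every n ≥ 0 and every m ∈ V, the expectation of the Φ-component at index m under the law of the chain after n steps (a finite sum, since this law has finite support) equals φ^{(n)}_m, the n-th source-iteration iterate with initial datum φ^{(0)}_m = Σ_{k∈V} ω(k) K(k,m) • ψ⁰(k). -/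
/-! Given any state `(v, Φ)`, the next `Φ'` is an importance-sampling estimator of the
source-iteration sweep `T Φ = siMap ω K A b Φ = (m ↦ Σ_k ω k K k m • (A_k Φ_k + b_k))`: the weight
`ω K / p^v` exactly compensates for sampling `v'(g)` with probability `p^v`. As `T` is affine and
the weights of a probability law sum to one, taking expectations commutes with `T`, so by
induction on `n` the chain started at `(v, Φ)` has mean `T^n Φ` after `n` steps. The RSI initial
distribution is the same estimator for uniform probabilities, with mean `φ^{(0)}`. -/

open Finset

namespace RSI10

variable {V : Type*} [Fintype V] [DecidableEq V] {G : ℕ}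
variable {H : Type*} [NormedAddCommGroup H] [NormedSpace ℝ H] [CompleteSpace H]

/-- Selections: one ordinate chosen from each group. -/
abbrev Sel (grp : V → Fin G) := {v : Fin G → V // ∀ g, grp (v g) = g}

/-- `c^v(m) = Σ_g ω(v(g)) K(v(g), m)`. -/
def cf (grp : V → Fin G) (ω : V → ℝ) (K : V → V → ℝ) (v : Sel grp) (m : V) : ℝ :=
  ∑ g, ω (v.1 g) * K (v.1 g) m

/-- RSI selection probability `p^v(m)`. -/
noncomputable def pf (grp : V → Fin G) (ω : V → ℝ) (K : V → V → ℝ) (v : Sel grp) (m : V) : ℝ :=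
  ω m * cf grp ω K v m /
    ∑ m' ∈ univ.filter (fun m' => grp m' = grp m), ω m' * cf grp ω K v m'

/-- One deterministic step of the RSI chain given the newly drawn selection `v'`. -/
noncomputable def step (grp : V → Fin G) (ω : V → ℝ) (K : V → V → ℝ)
    (A : V → H →L[ℝ] H) (b : V → H)
    (s : Sel grp × (V → H)) (v' : Sel grp) : Sel grp × (V → H) :=
  (v', fun m => ∑ g, (ω (v'.1 g) * K (v'.1 g) m / pf grp ω K s.1 (v'.1 g)) •
      (A (v'.1 g) (s.2 (v'.1 g)) + b (v'.1 g)))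

/-- Expectation of an `H`-valued observable of the RSI chain after `n` steps,
started from the state `s` (a finite sum, since the law has finite support). -/
noncomputable def exps (grp : V → Fin G) (ω : V → ℝ) (K : V → V → ℝ)
    (A : V → H →L[ℝ] H) (b : V → H) :
    ℕ → ((Sel grp × (V → H)) → H) → (Sel grp × (V → H)) → H
  | 0, f, s => f s
  | n + 1, f, s => ∑ v' : Sel grp,
      (∏ g, pf grp ω K s.1 (v'.1 g)) • exps grp ω K A b n f (step grp ω K A b s v')

/-- Source iteration: `φ^{(n)}_m = Σ_k ω k K k m • (A_k φ^{(n-1)}_k + b_k)`. -/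
noncomputable def phiSI (ω : V → ℝ) (K : V → V → ℝ)
    (A : V → H →L[ℝ] H) (b : V → H) (φ0 : V → H) : ℕ → V → H
  | 0 => φ0
  | n + 1 => fun m => ∑ k, (ω k * K k m) • (A k (phiSI ω K A b φ0 n k) + b k)

/-- Cardinality `|V_g|` of group `g`. -/
def gcard (grp : V → Fin G) (g : Fin G) : ℕ := (univ.filter fun k => grp k = g).card

end RSI10

namespace Fintype

variable {ι α R M : Type*} [Fintype ι] [DecidableEq ι] [CommSemiring R]

theorem sum_piFinset_prod_eq_one (t : ι → Finset α) (q : α → R)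
    (hq : ∀ i, ∑ a ∈ t i, q a = 1) :
    ∑ x ∈ piFinset t, ∏ i, q (x i) = 1 := by
  rw [← prod_univ_sum]
  exact Finset.prod_eq_one fun i _ => hq i

theorem sum_piFinset_prod_smul_apply [DecidableEq α] [AddCommMonoid M] [Module R M]
    (t : ι → Finset α) (q : α → R) (hq : ∀ i, ∑ a ∈ t i, q a = 1) (i₀ : ι) (F : α → M) :
    ∑ x ∈ piFinset t, (∏ i, q (x i)) • F (x i₀) = ∑ a ∈ t i₀, q a • F a := by
  rw [← sum_fiberwise_of_maps_to (g := fun x => x i₀) fun x hx => mem_piFinset.1 hx i₀]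
  refine Finset.sum_congr rfl fun a ha => ?_
  have hfiber : ∑ x ∈ piFinset t with x i₀ = a, ∏ i, q (x i) = q a := by
    rw [← piFinset_update_singleton_eq_filter_piFinset_eq t i₀ ha, ← prod_univ_sum,
      prod_eq_single_of_mem i₀ (mem_univ _) fun i _ hi => by simp [hi, hq i]]
    simp
  rw [Finset.sum_congr rfl fun x hx => by rw [(mem_filter.1 hx).2], ← sum_smul, hfiber]

end Fintype

namespace RSI10

section

variable {V : Type*} {G : ℕ} {grp : V → Fin G}

theorem cf_pos {ω : V → ℝ} {K : V → V → ℝ} (hω : ∀ k, 0 < ω k) (hK : ∀ k m, 0 < K k m)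
    (v : Sel grp) (m : V) : 0 < cf grp ω K v m :=
  have : Nonempty (Fin G) := ⟨grp m⟩
  sum_pos (fun _ _ => mul_pos (hω _) (hK _ _)) univ_nonempty

variable [Fintype V]
variable {M : Type*} [AddCommGroup M] [Module ℝ M]

theorem sum_sel_eq_sum_piFinset (grp : V → Fin G) {N : Type*} [AddCommMonoid N]
    (f : (Fin G → V) → N) :
    ∑ v : Sel grp, f v.1 = ∑ v ∈ Fintype.piFinset fun g => univ.filter (grp · = g), f v :=
  (sum_subtype _ (by simp) f).symm

/-- Expectation under the law of a random selection whose coordinates are independent,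
`v g` being drawn in `V_g` with probability `q`. -/
noncomputable def selExpect (grp : V → Fin G) (q : V → ℝ) (F : Sel grp → M) : M :=
  ∑ v : Sel grp, (∏ g, q (v.1 g)) • F v

theorem selExpect_apply {ι : Type*} {N : ι → Type*} [∀ i, AddCommGroup (N i)]
    [∀ i, Module ℝ (N i)] (q : V → ℝ) (F : Sel grp → ∀ i, N i) (i : ι) :
    selExpect grp q F i = selExpect grp q fun v => F v i := by
  simp [selExpect, Finset.sum_apply]

variable {q : V → ℝ}

theorem sum_sel_prod_eq_one (hq : ∀ g, ∑ k ∈ univ.filter (grp · = g), q k = 1) :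
    ∑ v : Sel grp, ∏ g, q (v.1 g) = 1 := by
  rw [sum_sel_eq_sum_piFinset grp fun v => ∏ g, q (v g)]
  exact Fintype.sum_piFinset_prod_eq_one _ q hq

theorem selExpect_eval (hq : ∀ g, ∑ k ∈ univ.filter (grp · = g), q k = 1) (g₀ : Fin G)
    (F : V → M) :
    selExpect grp q (fun v => F (v.1 g₀)) = ∑ k ∈ univ.filter (grp · = g₀), q k • F k := by
  classical
  rw [selExpect, sum_sel_eq_sum_piFinset grp fun v => (∏ g, q (v g)) • F (v g₀)]
  exact Fintype.sum_piFinset_prod_smul_apply _ q hq g₀ F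

theorem _root_.AffineMap.map_selExpect {N : Type*} [AddCommGroup N] [Module ℝ N]
    (hq : ∀ g, ∑ k ∈ univ.filter (grp · = g), q k = 1) (f : M →ᵃ[ℝ] N) (F : Sel grp → M) :
    f (selExpect grp q F) = selExpect grp q (f ∘ F) := by
  have hw : ∑ v ∈ univ, ∏ g, q ((v : Sel grp).1 g) = 1 := sum_sel_prod_eq_one hq
  simp only [selExpect, ← affineCombination_eq_linear_combination _ _ _ hw,
    map_affineCombination _ _ _ hw]

/-- Importance sampling. -/
theorem selExpect_sum_div_smul (hq : ∀ g, ∑ k ∈ univ.filter (grp · = g), q k = 1)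
    (hq0 : ∀ k, q k ≠ 0) (w : V → ℝ) (ψ : V → M) :
    selExpect grp q (fun v => ∑ g, (w (v.1 g) / q (v.1 g)) • ψ (v.1 g)) = ∑ k, w k • ψ k := by
  simp only [selExpect, smul_sum]
  rw [sum_comm, ← sum_fiberwise univ grp fun k => w k • ψ k]
  refine sum_congr rfl fun g _ => ?_
  rw [← selExpect, selExpect_eval hq g fun k => (w k / q k) • ψ k]
  refine sum_congr rfl fun k _ => ?_
  rw [smul_smul, mul_div_cancel₀ _ (hq0 k)]

variable {H : Type*} [NormedAddCommGroup H] [NormedSpace ℝ H]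
variable (ω : V → ℝ) (K : V → V → ℝ) (A : V → H →L[ℝ] H) (b : V → H)

noncomputable def siMap : (V → H) →ᵃ[ℝ] (V → H) where
  toFun φ m := ∑ k, (ω k * K k m) • (A k (φ k) + b k)
  linear :=
    { toFun := fun φ m => ∑ k, (ω k * K k m) • A k (φ k)
      map_add' := fun φ χ => by ext m; simp [smul_add, sum_add_distrib]
      map_smul' := fun c φ => by ext m; simp [smul_sum, smul_comm c] }
  map_vadd' := fun φ χ => by ext m; simp [smul_add, sum_add_distrib, add_assoc]

theorem phiSI_eq_pow_apply (φ : V → H) (n : ℕ) : phiSI ω K A b φ n = (siMap ω K A b ^ n) φ := by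
  induction n with
  | zero => rfl
  | succ n ih => rw [pow_succ', AffineMap.coe_mul, Function.comp_apply, ← ih]; rfl

theorem phiSI_succ' (φ : V → H) (n : ℕ) :
    phiSI ω K A b φ (n + 1) = phiSI ω K A b (siMap ω K A b φ) n := by
  rw [phiSI_eq_pow_apply, phiSI_eq_pow_apply, pow_succ, AffineMap.coe_mul, Function.comp_apply]

theorem phiSI_selExpect (hq : ∀ g, ∑ k ∈ univ.filter (grp · = g), q k = 1)
    (Φ : Sel grp → V → H) (n : ℕ) :
    phiSI ω K A b (selExpect grp q Φ) n = selExpect grp q fun v => phiSI ω K A b (Φ v) n := by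
  rw [phiSI_eq_pow_apply, AffineMap.map_selExpect hq]
  simp only [Function.comp_def, phiSI_eq_pow_apply]

variable {ω K}

theorem pf_pos (hω : ∀ k, 0 < ω k) (hK : ∀ k m, 0 < K k m) (v : Sel grp) (k : V) :
    0 < pf grp ω K v k := by
  have hv : v.1 (grp k) ∈ univ.filter fun m' => grp m' = grp k := by simp [v.2]
  exact div_pos (mul_pos (hω k) (cf_pos hω hK v k))
    (sum_pos (fun m' _ => mul_pos (hω m') (cf_pos hω hK v m')) ⟨_, hv⟩)

theorem sum_pf_eq_one (hω : ∀ k, 0 < ω k) (hK : ∀ k m, 0 < K k m) (v : Sel grp) (g : Fin G) :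
    ∑ k ∈ univ.filter (grp · = g), pf grp ω K v k = 1 := by
  have hv : v.1 g ∈ univ.filter fun m' => grp m' = g := by simp [v.2]
  have hD := sum_pos (fun m' _ => mul_pos (hω m') (cf_pos hω hK v m')) ⟨_, hv⟩
  rw [← div_self hD.ne', sum_div]
  refine sum_congr rfl fun k hk => ?_
  rw [pf, (mem_filter.1 hk).2]

theorem selExpect_step (hω : ∀ k, 0 < ω k) (hK : ∀ k m, 0 < K k m) (s : Sel grp × (V → H)) :
    selExpect grp (pf grp ω K s.1) (fun v' => (step grp ω K A b s v').2) = siMap ω K A b s.2 := by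
  ext m
  rw [selExpect_apply]
  exact selExpect_sum_div_smul (sum_pf_eq_one hω hK s.1) (fun k => (pf_pos hω hK s.1 k).ne')
    (fun k => ω k * K k m) fun k => A k (s.2 k) + b k

theorem exps_eq_phiSI (hω : ∀ k, 0 < ω k) (hK : ∀ k m, 0 < K k m) (m : V) (n : ℕ) :
    ∀ s, exps grp ω K A b n (fun s => s.2 m) s = phiSI ω K A b s.2 n m := by
  induction n with
  | zero => exact fun _ => rfl
  | succ n ih =>
    intro s
    calc exps grp ω K A b (n + 1) (fun s => s.2 m) s
        = selExpect grp (pf grp ω K s.1) fun v' => phiSI ω K A b (step grp ω K A b s v').2 n m :=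
          sum_congr rfl fun v' _ => by rw [ih]
      _ = phiSI ω K A b (siMap ω K A b s.2) n m := by
          rw [← selExpect_step A b hω hK, phiSI_selExpect _ _ _ _ (sum_pf_eq_one hω hK s.1),
            selExpect_apply]
      _ = phiSI ω K A b s.2 (n + 1) m := by rw [phiSI_succ']

end

variable {V : Type*} [Fintype V] [DecidableEq V] {G : ℕ}
variable {H : Type*} [NormedAddCommGroup H] [NormedSpace ℝ H] [CompleteSpace H]

/-- Theorem 2.1 (unbiasedness of RSI with respect to SI), for the abstract RSI
chain: the expectation of the `Φ`-component at index `m` after `n` steps of the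
RSI chain, started from the RSI initial distribution built from `ψ0`
(uniform independent choice of `v⁰(g)` in each group, and
`Φ⁰_m = Σ_g |V_g| ω(v⁰(g)) K(v⁰(g), m) • ψ0(v⁰(g))`), equals the `n`-th
source-iteration iterate with initial datum `φ^{(0)}_m = Σ_k ω k K k m • ψ0 k`. -/
theorem rsi_unbiased
    (grp : V → Fin G) (hgrp : ∀ g : Fin G, ∃ k, grp k = g)
    (ω : V → ℝ) (hω : ∀ k, 0 < ω k)
    (K : V → V → ℝ) (hK : ∀ k m, 0 < K k m)
    (A : V → H →L[ℝ] H) (b : V → H)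
    (ψ0 : V → H) (n : ℕ) (m : V) :
    ∑ v0 : Sel grp,
        (∏ g, ((gcard grp g : ℝ))⁻¹) •
          exps grp ω K A b n (fun s => s.2 m)
            (v0, fun m' => ∑ g,
              ((gcard grp g : ℝ) * (ω (v0.1 g) * K (v0.1 g) m')) • ψ0 (v0.1 g))
      = phiSI ω K A b (fun m' => ∑ k, (ω k * K k m') • ψ0 k) n m := by
  have hcard : ∀ g, (gcard grp g : ℝ) ≠ 0 := fun g => by
    obtain ⟨k, hk⟩ := hgrp g
    exact Nat.cast_ne_zero.2 (card_ne_zero_of_mem (mem_filter.2 ⟨mem_univ k, hk⟩))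
  set q : V → ℝ := fun k => (gcard grp (grp k) : ℝ)⁻¹
  have hq : ∀ g, ∑ k ∈ univ.filter (grp · = g), q k = 1 := fun g => by
    rw [sum_congr rfl fun k hk => show q k = (gcard grp g : ℝ)⁻¹ by simp [q, (mem_filter.1 hk).2],
      sum_const, nsmul_eq_mul]
    exact mul_inv_cancel₀ (hcard g)
  have hqv : ∀ (v : Sel grp) g, q (v.1 g) = (gcard grp g : ℝ)⁻¹ := fun v g => by simp [q, v.2 g]
  set Φ0 : Sel grp → V → H := fun v0 m' => ∑ g,
    ((gcard grp g : ℝ) * (ω (v0.1 g) * K (v0.1 g) m')) • ψ0 (v0.1 g)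
  calc _ = selExpect grp q fun v0 => phiSI ω K A b (Φ0 v0) n m := by
        simp only [selExpect, hqv, exps_eq_phiSI A b hω hK]
        rfl
    _ = phiSI ω K A b (selExpect grp q Φ0) n m := by
        rw [phiSI_selExpect _ _ _ _ hq, selExpect_apply]
    _ = _ := by
        congr 1
        ext m'
        rw [selExpect_apply, ← selExpect_sum_div_smul hq (fun k => inv_ne_zero (hcard _))]
        simp only [Φ0, hqv, div_inv_eq_mul, mul_comm]

end RSI10
end

section
/- Assume additionally that 0 < α ≤ K(k,m) ≤ β for all k, m ∈ V, that Σ_{m∈V} ω(m) K(k,m) = 1 for every k ∈ V, that λ ≥ 0 satisfies ‖A_m x‖ ≤ λ‖x‖ for all m ∈ V and x ∈ H, and that λβ/α < 1. For any Φ^{(0)} : V → H and any sequence of selections v^{(0)}, v^{(1)}, v^{(2)}, …, define deterministically Φ^{(n)}_m = Σ_{g=1}^G ( ω(v^{(n)}(g)) K(v^{(n)}(g), m) / p^{v^{(n-1)}}(v^{(n)}(g)) ) • ( A_{v^{(n)}(g)} Φ^{(n-1)}_{v^{(n)}(g)} + b_{v^{(n)}(g)} ) for n ≥ 1 and m ∈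 V. Then for every n ≥ 0 and every m ∈ V: ‖Φ^{(n)}_m‖ ≤ (λβ/α)ⁿ · max_{k∈V} ‖Φ^{(0)}_k‖ + (β/α) · max_{k∈V} ‖b_k‖ / (1 − λβ/α). In particular, the iterates are bounded uniformly in n and in the choice of selection sequence. -/
open Finset

namespace RSI12

variable {V : Type*} [Fintype V] [DecidableEq V] {G : ℕ}
variable {H : Type*} [NormedAddCommGroup H] [NormedSpace ℝ H] [CompleteSpace H]

/-- Selections: one ordinate chosen from each group. -/
abbrev Sel (grp : V → Fin G) := {v : Fin G → V // ∀ g, grp (v g) = g}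

/-- `c^v(m) = Σ_g ω(v(g)) K(v(g), m)`. -/
def cf (grp : V → Fin G) (ω : V → ℝ) (K : V → V → ℝ) (v : Sel grp) (m : V) : ℝ :=
  ∑ g, ω (v.1 g) * K (v.1 g) m

/-- RSI selection probability `p^v(m)`. -/
noncomputable def pf (grp : V → Fin G) (ω : V → ℝ) (K : V → V → ℝ) (v : Sel grp) (m : V) : ℝ :=
  ω m * cf grp ω K v m /
    ∑ m' ∈ univ.filter (fun m' => grp m' = grp m), ω m' * cf grp ω K v m'

lemma coef_facts [Nonempty V]
    (grp : V → Fin G)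
    (ω : V → ℝ) (hω : ∀ k, 0 < ω k)
    (K : V → V → ℝ) (α β : ℝ) (hα : 0 < α)
    (hK : ∀ k m, α ≤ K k m ∧ K k m ≤ β)
    (hnorm : ∀ k, ∑ m, ω m * K k m = 1)
    (v' v : Sel grp) (m : V) :
    (∀ g, 0 ≤ ω (v.1 g) * K (v.1 g) m / pf grp ω K v' (v.1 g)) ∧
      ∑ g, ω (v.1 g) * K (v.1 g) m / pf grp ω K v' (v.1 g) ≤ β / α := by
  have hFinG : Nonempty (Fin G) := ⟨grp (Classical.arbitrary V)⟩
  have hβ : 0 < β := by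
    obtain ⟨k0⟩ : Nonempty V := ‹_›
    exact hα.trans_le ((hK k0 k0).1.trans (hK k0 k0).2)
  set W : ℝ := ∑ g, ω (v'.1 g) with hWdef
  have hW : 0 < W := Finset.sum_pos (fun g _ => hω _) univ_nonempty
  have hcα : ∀ m', α * W ≤ cf grp ω K v' m' := by
    intro m'
    calc α * W = ∑ g, α * ω (v'.1 g) := by rw [hWdef, Finset.mul_sum]
      _ ≤ ∑ g, ω (v'.1 g) * K (v'.1 g) m' := by
          apply Finset.sum_le_sum
          intro g _
          rw [mul_comm]
          exact mul_le_mul_of_nonneg_left (hK _ _).1 (hω _).le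
      _ = cf grp ω K v' m' := rfl
  have hcpos : ∀ m', 0 < cf grp ω K v' m' :=
    fun m' => lt_of_lt_of_le (mul_pos hα hW) (hcα m')
  set S : Fin G → ℝ :=
    fun g => ∑ m' ∈ univ.filter (fun m' => grp m' = g), ω m' * cf grp ω K v' m' with hSdef
  have hS0 : ∀ g, 0 ≤ S g :=
    fun g => Finset.sum_nonneg fun m' _ => mul_nonneg (hω _).le (hcpos _).le
  have hSsum : ∑ g, S g = W := by
    have h1 : ∑ g, S g = ∑ m', ω m' * cf grp ω K v' m' :=
      Finset.sum_fiberwise_of_maps_to (fun i _ => mem_univ _) _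
    rw [h1]
    calc ∑ m', ω m' * cf grp ω K v' m'
        = ∑ m', ∑ g, ω (v'.1 g) * (ω m' * K (v'.1 g) m') := by
          refine Finset.sum_congr rfl fun m' _ => ?_
          simp only [cf, Finset.mul_sum]
          exact Finset.sum_congr rfl fun g _ => by ring
      _ = ∑ g, ω (v'.1 g) * ∑ m', ω m' * K (v'.1 g) m' := by
          rw [Finset.sum_comm]
          exact Finset.sum_congr rfl fun g _ => (Finset.mul_sum _ _ _).symm
      _ = ∑ g, ω (v'.1 g) := by simp [hnorm]
  have hcoef : ∀ g, ω (v.1 g) * K (v.1 g) m / pf grp ω K v' (v.1 g)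
      = K (v.1 g) m * S g / cf grp ω K v' (v.1 g) := by
    intro g
    have hk : grp (v.1 g) = g := v.2 g
    have hSg : 0 < S g := by
      refine Finset.sum_pos (fun m' _ => mul_pos (hω _) (hcpos _)) ⟨v.1 g, ?_⟩
      simp [hk]
    have hpf : pf grp ω K v' (v.1 g) = ω (v.1 g) * cf grp ω K v' (v.1 g) / S g := by
      simp only [pf, hk, hSdef]
    rw [hpf]
    have h1 : ω (v.1 g) ≠ 0 := (hω _).ne'
    have h2 : cf grp ω K v' (v.1 g) ≠ 0 := (hcpos _).ne'
    have h3 : S g ≠ 0 := hSg.ne'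
    field_simp
  constructor
  · intro g
    rw [hcoef g]
    exact div_nonneg (mul_nonneg (hα.le.trans (hK _ _).1) (hS0 g)) (hcpos _).le
  · calc ∑ g, ω (v.1 g) * K (v.1 g) m / pf grp ω K v' (v.1 g)
        = ∑ g, K (v.1 g) m * S g / cf grp ω K v' (v.1 g) :=
          Finset.sum_congr rfl fun g _ => hcoef g
      _ ≤ ∑ g, β * S g / (α * W) := by
          refine Finset.sum_le_sum fun g _ => ?_
          exact div_le_div₀ (mul_nonneg hβ.le (hS0 g))
            (mul_le_mul_of_nonneg_right (hK _ _).2 (hS0 g)) (mul_pos hα hW) (hcα _)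
      _ = β / α := by
          rw [← Finset.sum_div, ← Finset.mul_sum, hSsum, mul_div_mul_right _ _ hW.ne']

/-- Lemma 3.3 (pathwise uniform boundedness of the RSI iterates): with
`0 < α ≤ K ≤ β`, `Σ_m ω m K k m = 1`, `‖A_m x‖ ≤ λ‖x‖` and `λβ/α < 1`, the
RSI iterates along any selection sequence satisfy
`‖Φ^{(n)}_m‖ ≤ (λβ/α)ⁿ max_k ‖Φ^{(0)}_k‖ + (β/α) max_k ‖b_k‖ / (1 − λβ/α)`,
uniformly in `n`, `m` and the selection sequence. -/
theorem rsi_iterates_uniformly_bounded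
    [Nonempty V]
    (grp : V → Fin G) (hgrp : ∀ g : Fin G, ∃ k, grp k = g)
    (ω : V → ℝ) (hω : ∀ k, 0 < ω k)
    (K : V → V → ℝ) (α β : ℝ) (hα : 0 < α)
    (hK : ∀ k m, α ≤ K k m ∧ K k m ≤ β)
    (hnorm : ∀ k, ∑ m, ω m * K k m = 1)
    (lam : ℝ) (hlam : 0 ≤ lam)
    (A : V → H →L[ℝ] H) (hA : ∀ m x, ‖A m x‖ ≤ lam * ‖x‖)
    (b : V → H)
    (hcontr : lam * β / α < 1)
    (vseq : ℕ → Sel grp) (Φ : ℕ → V → H)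
    (hrec : ∀ (n : ℕ) (m : V),
      Φ (n + 1) m = ∑ g,
        (ω ((vseq (n + 1)).1 g) * K ((vseq (n + 1)).1 g) m /
            pf grp ω K (vseq n) ((vseq (n + 1)).1 g)) •
          (A ((vseq (n + 1)).1 g) (Φ n ((vseq (n + 1)).1 g)) + b ((vseq (n + 1)).1 g)))
    (n : ℕ) (m : V) :
    ‖Φ n m‖ ≤
      (lam * β / α) ^ n * (univ.sup' univ_nonempty fun k => ‖Φ 0 k‖)
        + (β / α) * (univ.sup' univ_nonempty fun k => ‖b k‖) / (1 - lam * β / α) := by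
  obtain ⟨k0⟩ : Nonempty V := ‹_›
  have hβ : 0 < β := hα.trans_le ((hK k0 k0).1.trans (hK k0 k0).2)
  set r := lam * β / α with hr
  have hr0 : 0 ≤ r := by positivity
  have h1r : 0 < 1 - r := by linarith [hcontr]
  set M0 := univ.sup' univ_nonempty fun k => ‖Φ 0 k‖ with hM0
  set B := univ.sup' univ_nonempty fun k => ‖b k‖ with hB
  have hM0le : ∀ k, ‖Φ 0 k‖ ≤ M0 := by
    intro k; rw [hM0]; exact Finset.le_sup' (fun k => ‖Φ 0 k‖) (mem_univ k)
  have hBle : ∀ k, ‖b k‖ ≤ B := by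
    intro k; rw [hB]; exact Finset.le_sup' (fun k => ‖b k‖) (mem_univ k)
  have hM0n : 0 ≤ M0 := le_trans (norm_nonneg (Φ 0 k0)) (hM0le k0)
  have hBn : 0 ≤ B := le_trans (norm_nonneg (b k0)) (hBle k0)
  induction n generalizing m with
  | zero =>
    have h1 : ‖Φ 0 m‖ ≤ M0 := hM0le m
    have h2 : 0 ≤ β / α * B / (1 - r) := by positivity
    simp only [pow_zero, one_mul]
    linarith
  | succ n ih =>
    obtain ⟨hnn, hsum⟩ := coef_facts grp ω hω K α β hα hK hnorm (vseq n) (vseq (n+1)) m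
    set t := lam * (r ^ n * M0 + β / α * B / (1 - r)) + B with ht
    have htn : 0 ≤ t := by positivity
    have step : ‖Φ (n+1) m‖ ≤ (β / α) * t := by
      rw [hrec n m]
      calc ‖∑ g, (ω ((vseq (n + 1)).1 g) * K ((vseq (n + 1)).1 g) m /
              pf grp ω K (vseq n) ((vseq (n + 1)).1 g)) •
            (A ((vseq (n + 1)).1 g) (Φ n ((vseq (n + 1)).1 g)) + b ((vseq (n + 1)).1 g))‖
          ≤ ∑ g, ‖(ω ((vseq (n + 1)).1 g) * K ((vseq (n + 1)).1 g) m /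
              pf grp ω K (vseq n) ((vseq (n + 1)).1 g)) •
            (A ((vseq (n + 1)).1 g) (Φ n ((vseq (n + 1)).1 g)) + b ((vseq (n + 1)).1 g))‖ :=
            norm_sum_le _ _
        _ ≤ ∑ g, (ω ((vseq (n + 1)).1 g) * K ((vseq (n + 1)).1 g) m /
              pf grp ω K (vseq n) ((vseq (n + 1)).1 g)) * t := by
            refine Finset.sum_le_sum fun g _ => ?_
            rw [norm_smul, Real.norm_eq_abs, abs_of_nonneg (hnn g)]
            refine mul_le_mul_of_nonneg_left ?_ (hnn g)
            calc ‖A ((vseq (n + 1)).1 g) (Φ n ((vseq (n + 1)).1 g)) + b ((vseq (n + 1)).1 g)‖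
                ≤ ‖A ((vseq (n + 1)).1 g) (Φ n ((vseq (n + 1)).1 g))‖ +
                  ‖b ((vseq (n + 1)).1 g)‖ := norm_add_le _ _
              _ ≤ lam * ‖Φ n ((vseq (n + 1)).1 g)‖ + B :=
                  add_le_add (hA _ _) (hBle _)
              _ ≤ t := by
                  rw [ht]
                  have := ih ((vseq (n + 1)).1 g)
                  gcongr
        _ ≤ (β / α) * t := by
            rw [← Finset.sum_mul]
            exact mul_le_mul_of_nonneg_right hsum htn
    have key : (β / α) * t = r ^ (n + 1) * M0 + β / α * B / (1 - r) := by
      have hαne : α ≠ 0 := hα.ne'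
      have h1rne : 1 - r ≠ 0 := h1r.ne'
      have hlt : lam * β < α := by
        have := (div_lt_one hα).mp hcontr
        linarith
      have h2 : α - β * lam ≠ 0 := by nlinarith
      rw [ht, hr] at *
      have h2' : α - lam * β ≠ 0 := by rw [mul_comm]; exact h2
      field_simp [h2, h2']
      have hinv : α * α⁻¹ = 1 := mul_inv_cancel₀ hαne
      linear_combination (β^2*β^n*lam^2*lam^n*α⁻¹^n*M0 - β*β^n*lam*lam^n*α*α⁻¹^n*M0) * hinv
    linarith [step, key]

end RSI12
end

section
/- Assume additionally that Σ_{m∈V} ω(m) K(k,m) = 1 for every k ∈ V and that λ ≥ 0 satisfies ‖A_m x‖ ≤ λ‖x‖ for all m ∈ V and x ∈ H. Consider the coupled RSI chain on triples (v, Φ¹, Φ²) whose one-step transition from (v, Φ¹, Φ²) is: set ψ^i_k = A_k(Φ^i_k) + b_k for i = 1, 2 and all k ∈ V; draw a single new selection v' with independent coordinates, ℙ(v'(g) = k) = p^v(k) for k ∈ V_g; and set Φ'^i_m = Σ_{g=1}^G ( ω(v'(g)) K(v'(g), m) / p^v(v'(g)) ) • ψ^i_{v'(g)} for i = 1, 2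 (both components use the same v'). Then, for any deterministic initial state (v⁰, Φ¹, Φ²) and every n ≥ 0, the law after n steps satisfies E[ Σ_{m∈V} ω(m) ‖Φ¹_m − Φ²_m‖ ] ≤ λⁿ · Σ_{m∈V} ω(m) ‖Φ¹_m(0) − Φ²_m(0)‖, where (Φ¹(0), Φ²(0)) is the initial pair. -/
open Finset

namespace RSI13

variable {V : Type*} [Fintype V] [DecidableEq V] {G : ℕ}
variable {H : Type*} [NormedAddCommGroup H] [NormedSpace ℝ H] [CompleteSpace H]

/-- Selections: one ordinate chosen from each group. -/
abbrev Sel (grp : V → Fin G) := {v : Fin G → V // ∀ g, grp (v g) = g}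

/-- `c^v(m) = Σ_g ω(v(g)) K(v(g), m)`. -/
def cf (grp : V → Fin G) (ω : V → ℝ) (K : V → V → ℝ) (v : Sel grp) (m : V) : ℝ :=
  ∑ g, ω (v.1 g) * K (v.1 g) m

/-- RSI selection probability `p^v(m)`. -/
noncomputable def pf (grp : V → Fin G) (ω : V → ℝ) (K : V → V → ℝ) (v : Sel grp) (m : V) : ℝ :=
  ω m * cf grp ω K v m /
    ∑ m' ∈ univ.filter (fun m' => grp m' = grp m), ω m' * cf grp ω K v m'

/-- The new `Φ`-component after one RSI step, from previous selection `v`,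
previous state `Φ`, and newly drawn selection `v'`. -/
noncomputable def newPhi (grp : V → Fin G) (ω : V → ℝ) (K : V → V → ℝ)
    (A : V → H →L[ℝ] H) (b : V → H)
    (v : Sel grp) (Φ : V → H) (v' : Sel grp) : V → H :=
  fun m => ∑ g, (ω (v'.1 g) * K (v'.1 g) m / pf grp ω K v (v'.1 g)) •
      (A (v'.1 g) (Φ (v'.1 g)) + b (v'.1 g))

/-- Expectation of a real-valued observable after `n` steps of the coupled RSI
chain on triples `(v, Φ¹, Φ²)`, where both components are updated with the
same newly drawn selection `v'` (a finite sum, since the law has finite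
support). -/
noncomputable def expsC (grp : V → Fin G) (ω : V → ℝ) (K : V → V → ℝ)
    (A : V → H →L[ℝ] H) (b : V → H) :
    ℕ → ((Sel grp × (V → H) × (V → H)) → ℝ) → (Sel grp × (V → H) × (V → H)) → ℝ
  | 0, f, s => f s
  | n + 1, f, s => ∑ v' : Sel grp,
      (∏ g, pf grp ω K s.1 (v'.1 g)) *
        expsC grp ω K A b n f
          (v', newPhi grp ω K A b s.1 s.2.1 v', newPhi grp ω K A b s.1 s.2.2 v')

/-! ### Auxiliary lemmas -/

section Aux

variable (grp : V → Fin G) (ω : V → ℝ) (K : V → V → ℝ)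

lemma cf_pos (hω : ∀ k, 0 < ω k) (hK : ∀ k m, 0 < K k m) (v : Sel grp) (m : V) :
    0 < cf grp ω K v m := by
  have : Nonempty (Fin G) := ⟨grp m⟩
  exact Finset.sum_pos (fun g _ => mul_pos (hω _) (hK _ _)) univ_nonempty

lemma denom_pos (hω : ∀ k, 0 < ω k) (hK : ∀ k m, 0 < K k m) (v : Sel grp) (m : V) :
    0 < ∑ m' ∈ univ.filter (fun m' => grp m' = grp m), ω m' * cf grp ω K v m' :=
  Finset.sum_pos (fun k _ => mul_pos (hω k) (cf_pos grp ω K hω hK v k)) ⟨m, by simp⟩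

lemma pf_pos (hω : ∀ k, 0 < ω k) (hK : ∀ k m, 0 < K k m) (v : Sel grp) (m : V) :
    0 < pf grp ω K v m :=
  div_pos (mul_pos (hω m) (cf_pos grp ω K hω hK v m)) (denom_pos grp ω K hω hK v m)

lemma pf_group_sum (hω : ∀ k, 0 < ω k) (hK : ∀ k m, 0 < K k m) (v : Sel grp)
    (g : Fin G) (hg : ∃ k, grp k = g) :
    ∑ k ∈ univ.filter (fun k => grp k = g), pf grp ω K v k = 1 := by
  obtain ⟨k0, hk0⟩ := hg
  have hd : 0 < ∑ m' ∈ univ.filter (fun m' => grp m' = g), ω m' * cf grp ω K v m' := by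
    have := denom_pos grp ω K hω hK v k0
    rwa [hk0] at this
  have hterm : ∀ k ∈ univ.filter (fun k => grp k = g),
      pf grp ω K v k = ω k * cf grp ω K v k /
        ∑ m' ∈ univ.filter (fun m' => grp m' = g), ω m' * cf grp ω K v m' := by
    intro k hk
    simp only [mem_filter, mem_univ, true_and] at hk
    rw [pf, hk]
  rw [Finset.sum_congr rfl hterm, ← Finset.sum_div, div_self hd.ne']

/-- The equivalence between dependent choices and selections. -/
def selEquiv : (∀ g, {k : V // grp k = g}) ≃ Sel grp where
  toFun w := ⟨fun g => (w g).1, fun g => (w g).2⟩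
  invFun v g := ⟨v.1 g, v.2 g⟩
  left_inv _ := rfl
  right_inv _ := rfl

lemma sel_sum (q : Fin G → V → ℝ) :
    ∑ v' : Sel grp, ∏ g, q g (v'.1 g)
      = ∏ g, ∑ k ∈ univ.filter (fun k => grp k = g), q g k := by
  calc ∑ v' : Sel grp, ∏ g, q g (v'.1 g)
      = ∑ w : ∀ g, {k : V // grp k = g}, ∏ g, q g ((w g).1) :=
        (Equiv.sum_comp (selEquiv grp) (fun v' : Sel grp => ∏ g, q g (v'.1 g))).symm
    _ = ∏ g, ∑ x : {k : V // grp k = g}, q g x.1 :=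
        (Fintype.prod_sum (fun g (x : {k : V // grp k = g}) => q g x.1)).symm
    _ = ∏ g, ∑ k ∈ univ.filter (fun k => grp k = g), q g k := by
        refine Finset.prod_congr rfl fun g _ => ?_
        rw [Finset.sum_subtype (p := fun k => grp k = g) _ (by simp) (q g)]

lemma sel_marginal (q : V → ℝ) (f : V → ℝ)
    (h1 : ∀ g : Fin G, ∑ k ∈ univ.filter (fun k => grp k = g), q k = 1) (g0 : Fin G) :
    ∑ v' : Sel grp, (∏ g, q (v'.1 g)) * f (v'.1 g0)
      = ∑ k ∈ univ.filter (fun k => grp k = g0), q k * f k := by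
  have key : ∀ v' : Sel grp, (∏ g, q (v'.1 g)) * f (v'.1 g0)
      = ∏ g, (fun g k => if g = g0 then q k * f k else q k) g (v'.1 g) := by
    intro v'
    rw [← Finset.mul_prod_erase univ (fun g => (fun g k => if g = g0 then q k * f k else q k) g
          (v'.1 g)) (mem_univ g0),
        ← Finset.mul_prod_erase univ (fun g => q (v'.1 g)) (mem_univ g0)]
    simp only [eq_self_iff_true, if_true]
    rw [Finset.prod_congr rfl (fun g hg => show (if g = g0 then q (v'.1 g) * f (v'.1 g)
          else q (v'.1 g)) = q (v'.1 g) by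
        simp only [mem_erase] at hg
        simp [hg.1])]
    ring
  rw [Finset.sum_congr rfl (fun v' _ => key v'),
    sel_sum grp (fun g k => if g = g0 then q k * f k else q k),
    ← Finset.mul_prod_erase univ _ (mem_univ g0)]
  simp only [eq_self_iff_true, if_true]
  have hrest : ∀ g ∈ univ.erase g0,
      (∑ k ∈ univ.filter (fun k => grp k = g), if g = g0 then q k * f k else q k) = 1 := by
    intro g hg
    simp only [mem_erase] at hg
    simp only [if_neg hg.1]
    exact h1 g
  rw [Finset.prod_congr rfl hrest, Finset.prod_const_one, mul_one]

end Aux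

/-- One-step contraction bound. -/
lemma step_bound
    (grp : V → Fin G) (hgrp : ∀ g : Fin G, ∃ k, grp k = g)
    (ω : V → ℝ) (hω : ∀ k, 0 < ω k)
    (K : V → V → ℝ) (hK : ∀ k m, 0 < K k m)
    (hnorm : ∀ k, ∑ m, ω m * K k m = 1)
    (lam : ℝ) (hlam : 0 ≤ lam)
    (A : V → H →L[ℝ] H) (hA : ∀ m x, ‖A m x‖ ≤ lam * ‖x‖)
    (b : V → H) (v : Sel grp) (Φ1 Φ2 : V → H) :
    ∑ v' : Sel grp, (∏ g, pf grp ω K v (v'.1 g)) *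
        ∑ m, ω m * ‖newPhi grp ω K A b v Φ1 v' m - newPhi grp ω K A b v Φ2 v' m‖
      ≤ lam * ∑ m, ω m * ‖Φ1 m - Φ2 m‖ := by
  set p : V → ℝ := pf grp ω K v with hp
  have hppos : ∀ k, 0 < p k := fun k => pf_pos grp ω K hω hK v k
  set f : V → ℝ := fun k => ω k / p k * (lam * ‖Φ1 k - Φ2 k‖) with hf
  -- pointwise bound on the inner sum
  have inner_bound : ∀ v' : Sel grp,
      (∑ m, ω m * ‖newPhi grp ω K A b v Φ1 v' m - newPhi grp ω K A b v Φ2 v' m‖)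
        ≤ ∑ g, f (v'.1 g) := by
    intro v'
    have hdiff : ∀ m, newPhi grp ω K A b v Φ1 v' m - newPhi grp ω K A b v Φ2 v' m
        = ∑ g, (ω (v'.1 g) * K (v'.1 g) m / p (v'.1 g)) •
            (A (v'.1 g) (Φ1 (v'.1 g) - Φ2 (v'.1 g))) := by
      intro m
      rw [newPhi, newPhi, ← Finset.sum_sub_distrib]
      refine Finset.sum_congr rfl fun g _ => ?_
      rw [← smul_sub, add_sub_add_right_eq_sub, ← (A (v'.1 g)).map_sub]
    have hnm : ∀ m, ‖newPhi grp ω K A b v Φ1 v' m - newPhi grp ω K A b v Φ2 v' m‖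
        ≤ ∑ g, (ω (v'.1 g) * K (v'.1 g) m / p (v'.1 g)) *
            (lam * ‖Φ1 (v'.1 g) - Φ2 (v'.1 g)‖) := by
      intro m
      rw [hdiff m]
      refine (norm_sum_le _ _).trans (Finset.sum_le_sum fun g _ => ?_)
      have hc : 0 ≤ ω (v'.1 g) * K (v'.1 g) m / p (v'.1 g) :=
        le_of_lt (div_pos (mul_pos (hω _) (hK _ _)) (hppos _))
      rw [norm_smul, Real.norm_of_nonneg hc]
      exact mul_le_mul_of_nonneg_left (hA _ _) hc
    calc (∑ m, ω m * ‖newPhi grp ω K A b v Φ1 v' m - newPhi grp ω K A b v Φ2 v' m‖)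
        ≤ ∑ m, ω m * ∑ g, (ω (v'.1 g) * K (v'.1 g) m / p (v'.1 g)) *
            (lam * ‖Φ1 (v'.1 g) - Φ2 (v'.1 g)‖) :=
          Finset.sum_le_sum fun m _ => mul_le_mul_of_nonneg_left (hnm m) (hω m).le
      _ = ∑ g, ∑ m, ω m * ((ω (v'.1 g) * K (v'.1 g) m / p (v'.1 g)) *
            (lam * ‖Φ1 (v'.1 g) - Φ2 (v'.1 g)‖)) := by
          simp_rw [Finset.mul_sum]
          rw [Finset.sum_comm]
      _ = ∑ g, f (v'.1 g) := by
          refine Finset.sum_congr rfl fun g _ => ?_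
          have : ∀ m, ω m * ((ω (v'.1 g) * K (v'.1 g) m / p (v'.1 g)) *
              (lam * ‖Φ1 (v'.1 g) - Φ2 (v'.1 g)‖))
              = (ω (v'.1 g) / p (v'.1 g) * (lam * ‖Φ1 (v'.1 g) - Φ2 (v'.1 g)‖)) *
                (ω m * K (v'.1 g) m) := fun m => by ring
          rw [Finset.sum_congr rfl fun m _ => this m, ← Finset.mul_sum, hnorm, mul_one]
  have hμ : ∀ v' : Sel grp, 0 ≤ ∏ g, p (v'.1 g) :=
    fun v' => Finset.prod_nonneg fun g _ => (hppos _).le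
  calc ∑ v' : Sel grp, (∏ g, p (v'.1 g)) *
        ∑ m, ω m * ‖newPhi grp ω K A b v Φ1 v' m - newPhi grp ω K A b v Φ2 v' m‖
      ≤ ∑ v' : Sel grp, (∏ g, p (v'.1 g)) * ∑ g, f (v'.1 g) :=
        Finset.sum_le_sum fun v' _ =>
          mul_le_mul_of_nonneg_left (inner_bound v') (hμ v')
    _ = ∑ g : Fin G, ∑ v' : Sel grp, (∏ g', p (v'.1 g')) * f (v'.1 g) := by
        simp_rw [Finset.mul_sum]
        rw [Finset.sum_comm]
    _ = ∑ g : Fin G, ∑ k ∈ univ.filter (fun k => grp k = g), p k * f k := by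
        refine Finset.sum_congr rfl fun g _ => ?_
        exact sel_marginal grp p f (fun g' => pf_group_sum grp ω K hω hK v g' (hgrp g')) g
    _ = ∑ g : Fin G, ∑ k ∈ univ.filter (fun k => grp k = g), lam * (ω k * ‖Φ1 k - Φ2 k‖) := by
        refine Finset.sum_congr rfl fun g _ => Finset.sum_congr rfl fun k _ => ?_
        have hpk := (hppos k).ne'
        rw [hf]
        field_simp
    _ = lam * ∑ m, ω m * ‖Φ1 m - Φ2 m‖ := by
        rw [Finset.sum_fiberwise univ grp (fun k => lam * (ω k * ‖Φ1 k - Φ2 k‖)),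
          Finset.mul_sum]

/-- Lemma 3.2 (contraction of two coupled RSI realizations sharing the same
random selections): for any deterministic initial state `(v⁰, Φ¹, Φ²)`,
`E[ Σ_m ω m ‖Φ¹_m(n) − Φ²_m(n)‖ ] ≤ λⁿ Σ_m ω m ‖Φ¹_m − Φ²_m‖`. -/
theorem rsi_coupled_contraction
    (grp : V → Fin G) (hgrp : ∀ g : Fin G, ∃ k, grp k = g)
    (ω : V → ℝ) (hω : ∀ k, 0 < ω k)
    (K : V → V → ℝ) (hK : ∀ k m, 0 < K k m)
    (hnorm : ∀ k, ∑ m, ω m * K k m = 1)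
    (lam : ℝ) (hlam : 0 ≤ lam)
    (A : V → H →L[ℝ] H) (hA : ∀ m x, ‖A m x‖ ≤ lam * ‖x‖)
    (b : V → H)
    (v0 : Sel grp) (Φ1 Φ2 : V → H) (n : ℕ) :
    expsC grp ω K A b n (fun s => ∑ m, ω m * ‖s.2.1 m - s.2.2 m‖) (v0, Φ1, Φ2)
      ≤ lam ^ n * ∑ m, ω m * ‖Φ1 m - Φ2 m‖ := by
  induction n generalizing v0 Φ1 Φ2 with
  | zero => simp [expsC]
  | succ n ih =>
    have hstep := step_bound grp hgrp ω hω K hK hnorm lam hlam A hA b v0 Φ1 Φ2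
    calc expsC grp ω K A b (n + 1) (fun s => ∑ m, ω m * ‖s.2.1 m - s.2.2 m‖) (v0, Φ1, Φ2)
        = ∑ v' : Sel grp, (∏ g, pf grp ω K v0 (v'.1 g)) *
            expsC grp ω K A b n (fun s => ∑ m, ω m * ‖s.2.1 m - s.2.2 m‖)
              (v', newPhi grp ω K A b v0 Φ1 v', newPhi grp ω K A b v0 Φ2 v') := rfl
      _ ≤ ∑ v' : Sel grp, (∏ g, pf grp ω K v0 (v'.1 g)) *
            (lam ^ n * ∑ m, ω m * ‖newPhi grp ω K A b v0 Φ1 v' m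
              - newPhi grp ω K A b v0 Φ2 v' m‖) :=
          Finset.sum_le_sum fun v' _ => mul_le_mul_of_nonneg_left (ih _ _ _)
            (Finset.prod_nonneg fun g _ => (pf_pos grp ω K hω hK v0 _).le)
      _ = lam ^ n * ∑ v' : Sel grp, (∏ g, pf grp ω K v0 (v'.1 g)) *
            ∑ m, ω m * ‖newPhi grp ω K A b v0 Φ1 v' m - newPhi grp ω K A b v0 Φ2 v' m‖ := by
          rw [Finset.mul_sum]
          exact Finset.sum_congr rfl fun v' _ => by ring
      _ ≤ lam ^ n * (lam * ∑ m, ω m * ‖Φ1 m - Φ2 m‖) :=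
          mul_le_mul_of_nonneg_left hstep (pow_nonneg hlam n)
      _ = lam ^ (n + 1) * ∑ m, ω m * ‖Φ1 m - Φ2 m‖ := by ring

end RSI13
end

section
/- Let (Ω, 𝔉, ℙ) be a probability space, C ≥ 0, λ ∈ [0,1), and r ∈ [0,1). Let (Δ_n)_{n≥0} be nonnegative real random variables with Δ_n ≤ C almost surely for every n. Let (E_n)_{n≥0} be a nonincreasing sequence of measurable events with E_0 = Ω and ℙ(E_n) ≤ rⁿ for all n, and set F_m = E_m \ E_{m+1}. Assume that for all 0 ≤ m ≤ n: E[Δ_n · 1_{F_m}] ≤ λ^{n−m} · E[Δ_m · 1_{F_m}]. Then for every ρ with max(λ, r) < ρ < 1 there exists a constant C' ≥ 0 such that E[Δ_n] ≤ C' · ρⁿ for all n ≥ 0. -/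
open MeasureTheory

/-- Abstract form of the key estimate (3.16) in the proof of Theorem 2.3
(ergodicity of RSI): if `Δ_n` are nonnegative random variables bounded by `C`,
`E_n` is a nonincreasing sequence of events with `ℙ(E_n) ≤ rⁿ` and `E_0 = Ω`,
and on each slab `F_m = E_m \ E_{m+1}` one has the contraction
`E[Δ_n 1_{F_m}] ≤ λ^{n−m} E[Δ_m 1_{F_m}]`, then for every
`ρ ∈ (max(λ, r), 1)` there is `C' ≥ 0` with `E[Δ_n] ≤ C' ρⁿ`. -/
theorem rsi_ergodicity_key_estimate
    {Ω : Type*} [MeasurableSpace Ω] (P : Measure Ω) [IsProbabilityMeasure P]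
    (C : ℝ) (hC : 0 ≤ C)
    (lam r : ℝ) (hlam0 : 0 ≤ lam) (hlam1 : lam < 1) (hr0 : 0 ≤ r) (hr1 : r < 1)
    (Δ : ℕ → Ω → ℝ)
    (hΔmeas : ∀ n, Measurable (Δ n))
    (hΔ0 : ∀ n, ∀ᵐ ω ∂P, 0 ≤ Δ n ω)
    (hΔC : ∀ n, ∀ᵐ ω ∂P, Δ n ω ≤ C)
    (E : ℕ → Set Ω) (hEmeas : ∀ n, MeasurableSet (E n))
    (hE0 : E 0 = Set.univ)
    (hEmono : ∀ n, E (n + 1) ⊆ E n)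
    (hEP : ∀ n, (P (E n)).toReal ≤ r ^ n)
    (hcontr : ∀ m n, m ≤ n →
      ∫ ω in E m \ E (m + 1), Δ n ω ∂P
        ≤ lam ^ (n - m) * ∫ ω in E m \ E (m + 1), Δ m ω ∂P)
    (ρ : ℝ) (hρ : max lam r < ρ) (hρ1 : ρ < 1) :
    ∃ C' ≥ 0, ∀ n, ∫ ω, Δ n ω ∂P ≤ C' * ρ ^ n := by
  classical
  set σ : ℝ := max lam r with hσdef
  have hσ0 : 0 ≤ σ := le_trans hlam0 (le_max_left _ _)
  have hρ0 : 0 < ρ := lt_of_le_of_lt hσ0 hρ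
  have hσρ : σ / ρ < 1 := (div_lt_one hρ0).2 hρ
  have hσρ0 : 0 ≤ σ / ρ := div_nonneg hσ0 hρ0.le
  -- bound n * σ^n ≤ K * ρ^n
  obtain ⟨K, hK⟩ : ∃ K, ∀ n : ℕ, (n : ℝ) * (σ / ρ) ^ n ≤ K := by
    have h := (tendsto_self_mul_const_pow_of_lt_one hσρ0 hσρ).bddAbove_range
    obtain ⟨K, hK⟩ := h
    exact ⟨K, fun n => hK (Set.mem_range_self n)⟩
  have hK0 : 0 ≤ K := le_trans (by simp) (hK 0)
  have hKn : ∀ n : ℕ, (n : ℝ) * σ ^ n ≤ K * ρ ^ n := by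
    intro n
    have := hK n
    have hpow : (σ / ρ) ^ n = σ ^ n / ρ ^ n := div_pow σ ρ n
    rw [hpow] at this
    have hρn : 0 < ρ ^ n := pow_pos hρ0 n
    calc (n : ℝ) * σ ^ n = ((n : ℝ) * (σ ^ n / ρ ^ n)) * ρ ^ n := by
          field_simp
      _ ≤ K * ρ ^ n := by
          exact mul_le_mul_of_nonneg_right this hρn.le
  -- integrability
  have hInt : ∀ n, Integrable (Δ n) P := by
    intro n
    refine (integrable_const C).mono' (hΔmeas n).aestronglyMeasurable ?_
    filter_upwards [hΔ0 n, hΔC n] with ω h0 h1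
    simpa [Real.norm_eq_abs, abs_of_nonneg h0] using h1
  -- decomposition of the integral
  have hdecomp : ∀ n k : ℕ, ∫ ω, Δ n ω ∂P
      = (∫ ω in E k, Δ n ω ∂P)
        + ∑ m ∈ Finset.range k, ∫ ω in E m \ E (m + 1), Δ n ω ∂P := by
    intro n k
    induction k with
    | zero => simp [hE0]
    | succ k ih =>
      rw [ih, Finset.sum_range_succ]
      have hsplit : ∫ ω in E k, Δ n ω ∂P
          = (∫ ω in E (k + 1), Δ n ω ∂P) + ∫ ω in E k \ E (k + 1), Δ n ω ∂P := by
        have := integral_diff (hEmeas (k + 1)) ((hInt n).integrableOn) (hEmono k)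
          (f := Δ n) (μ := P)
        linarith [this]
      rw [hsplit]; ring
  -- bound on the set integral of Δ m over a measurable set s
  have hsetbound : ∀ (m : ℕ) (s : Set Ω), MeasurableSet s →
      ∫ ω in s, Δ m ω ∂P ≤ C * (P s).toReal := by
    intro m s hs
    have h1 : ∫ ω in s, Δ m ω ∂P ≤ ∫ _ω in s, C ∂P := by
      refine integral_mono_ae ((hInt m).integrableOn) (integrableOn_const ?_)
        (ae_restrict_of_ae (hΔC m))
      exact measure_ne_top P s
    calc ∫ ω in s, Δ m ω ∂P ≤ ∫ _ω in s, C ∂P := h1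
      _ = (P s).toReal * C := by rw [setIntegral_const]; rfl
      _ = C * (P s).toReal := mul_comm _ _
  have hPF : ∀ m : ℕ, (P (E m \ E (m + 1))).toReal ≤ r ^ m := by
    intro m
    refine le_trans ?_ (hEP m)
    exact ENNReal.toReal_mono (measure_ne_top P _) (measure_mono Set.diff_subset)
  refine ⟨C * (1 + K), by positivity, fun n => ?_⟩
  have hterm : ∀ m ∈ Finset.range n, ∫ ω in E m \ E (m + 1), Δ n ω ∂P ≤ C * σ ^ n := by
    intro m hm
    have hmn : m ≤ n := (Finset.mem_range.1 hm).le
    have h1 := hcontr m n hmn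
    have h2 : ∫ ω in E m \ E (m + 1), Δ m ω ∂P ≤ C * r ^ m :=
      le_trans (hsetbound m _ ((hEmeas m).diff (hEmeas (m + 1))))
        (mul_le_mul_of_nonneg_left (hPF m) hC)
    have h3 : lam ^ (n - m) * ∫ ω in E m \ E (m + 1), Δ m ω ∂P
        ≤ lam ^ (n - m) * (C * r ^ m) :=
      mul_le_mul_of_nonneg_left h2 (pow_nonneg hlam0 _)
    have h4 : lam ^ (n - m) * (C * r ^ m) ≤ σ ^ (n - m) * (C * σ ^ m) := by
      have hl : lam ^ (n - m) ≤ σ ^ (n - m) :=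
        pow_le_pow_left₀ hlam0 (le_max_left _ _) _
      have hrm : r ^ m ≤ σ ^ m := pow_le_pow_left₀ hr0 (le_max_right _ _) _
      have := mul_le_mul hl (mul_le_mul_of_nonneg_left hrm hC)
        (by positivity) (by positivity)
      exact this
    have hpow : σ ^ (n - m) * σ ^ m = σ ^ n := by
      rw [← pow_add, Nat.sub_add_cancel hmn]
    have h5 : σ ^ (n - m) * (C * σ ^ m) = C * σ ^ n := by
      rw [← hpow]; ring
    calc ∫ ω in E m \ E (m + 1), Δ n ω ∂P
        ≤ lam ^ (n - m) * ∫ ω in E m \ E (m + 1), Δ m ω ∂P := h1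
      _ ≤ lam ^ (n - m) * (C * r ^ m) := h3
      _ ≤ σ ^ (n - m) * (C * σ ^ m) := h4
      _ = C * σ ^ n := h5
  have hEn : ∫ ω in E n, Δ n ω ∂P ≤ C * ρ ^ n := by
    refine le_trans (hsetbound n _ (hEmeas n)) ?_
    have : (P (E n)).toReal ≤ ρ ^ n :=
      le_trans (hEP n)
        (pow_le_pow_left₀ hr0 (le_trans (le_max_right lam r) hρ.le) n)
    exact mul_le_mul_of_nonneg_left this hC
  have hsum : ∑ m ∈ Finset.range n, ∫ ω in E m \ E (m + 1), Δ n ω ∂P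
      ≤ (n : ℝ) * (C * σ ^ n) := by
    calc ∑ m ∈ Finset.range n, ∫ ω in E m \ E (m + 1), Δ n ω ∂P
        ≤ ∑ _m ∈ Finset.range n, C * σ ^ n := Finset.sum_le_sum hterm
      _ = (n : ℝ) * (C * σ ^ n) := by
          rw [Finset.sum_const, Finset.card_range, nsmul_eq_mul]
  have hnσ : (n : ℝ) * (C * σ ^ n) ≤ C * (K * ρ ^ n) := by
    have := hKn n
    calc (n : ℝ) * (C * σ ^ n) = C * ((n : ℝ) * σ ^ n) := by ring
      _ ≤ C * (K * ρ ^ n) := mul_le_mul_of_nonneg_left this hC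
  calc ∫ ω, Δ n ω ∂P
      = (∫ ω in E n, Δ n ω ∂P)
        + ∑ m ∈ Finset.range n, ∫ ω in E m \ E (m + 1), Δ n ω ∂P := hdecomp n n
    _ ≤ C * ρ ^ n + C * (K * ρ ^ n) := add_le_add hEn (le_trans hsum hnσ)
    _ = C * (1 + K) * ρ ^ n := by ring
end
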